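/- arXiv:2509.10182 — 5 statements merged into one kernel-verified Lean document; each statement's English description precedes it below -/
import Mathlib

section
/- The oriented graph F⃗ defined as follows is pushably 3-critical: its vertices are v1, v2, v3, v4, u, p1, p2, p3, a1, a2, b1, b2 (12 vertices) and its arcs are v3→v1, v3→v2, v4→u, u→v3, v1→p1, p2→p1, p2→p3, p3→v2, v1→a1, a1→a2, a2→v4, v2→b1, b1→b2, b2→v4 (14 arcs). Consequently 13·|A(F⃗)| = 15·|V(F⃗)| + 2, so the density bound 13|A| ≥ 15|V| + 2 for pushably 3-critical oriented graphs is attained with equality. -/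
set_option maxHeartbeats 1000000

/-- An oriented graph on vertex type `V`: an irreflexive, asymmetric arc relation
(no loops, no pair of opposite arcs). -/
structure OGraph (V : Type) where
  adj : V → V → Prop
  irrefl' : ∀ v, ¬ adj v v
  asymm' : ∀ u v, adj u v → ¬ adj v u

namespace OGraph

variable {V W : Type}

/-- `f` is a homomorphism of oriented graphs from `G` to `H`. -/
def Hom (G : OGraph V) (H : OGraph W) (f : V → W) : Prop :=
  ∀ u v, G.adj u v → H.adj (f u) (f v)

/-- `G` admits a homomorphism to `H`. -/
def HasHom (G : OGraph V) (H : OGraph W) : Prop := ∃ f, G.Hom H f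

/-- Pushing a set `S` of vertices: reverse every arc with exactly one endpoint in `S`. -/
def push (G : OGraph V) (S : Set V) : OGraph V where
  adj u v := (((u ∈ S) ↔ (v ∈ S)) ∧ G.adj u v) ∨ (¬((u ∈ S) ↔ (v ∈ S)) ∧ G.adj v u)
  irrefl' := by
    rintro v (⟨_, h⟩ | ⟨h, _⟩)
    · exact G.irrefl' v h
    · exact h Iff.rfl
  asymm' := by
    rintro u v (⟨e1, h1⟩ | ⟨e1, h1⟩) (⟨e2, h2⟩ | ⟨e2, h2⟩)
    · exact G.asymm' u v h1 h2
    · exact e2 e1.symm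
    · exact e1 e2.symm
    · exact G.asymm' u v h2 h1

/-- Isomorphism of oriented graphs. -/
def Iso (G : OGraph V) (H : OGraph W) : Prop :=
  ∃ e : V ≃ W, ∀ u v, G.adj u v ↔ H.adj (e u) (e v)

/-- `G` and `H` are push-equivalent: some push of `G` is isomorphic to `H`. -/
def PushEquiv (G : OGraph V) (H : OGraph W) : Prop :=
  ∃ S : Set V, (G.push S).Iso H

/-- `G` admits a pushable homomorphism to `H`. -/
def PushHom (G : OGraph V) (H : OGraph W) : Prop :=
  ∃ S : Set V, (G.push S).HasHom H

/-- `G` is pushably `k`-colorable: it admits a pushable homomorphism to some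
oriented graph on `k` vertices. -/
def PushablyColorable (G : OGraph V) (k : ℕ) : Prop :=
  ∃ H : OGraph (Fin k), G.PushHom H

/-- The pushable chromatic number: the least `k` such that `G` is pushably `k`-colorable. -/
noncomputable def pushChromatic (G : OGraph V) : ℕ :=
  sInf {k | G.PushablyColorable k}

/-- The number of arcs of `G`. -/
noncomputable def arcCount (G : OGraph V) : ℕ :=
  Nat.card {p : V × V // G.adj p.1 p.2}

/-- The potential `ρ(G) = 15|V(G)| − 13|A(G)|`. -/
noncomputable def potential (G : OGraph V) : ℤ :=
  15 * (Nat.card V : ℤ) - 13 * (G.arcCount : ℤ)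

/-- The degree of a vertex in the underlying graph. -/
noncomputable def degree (G : OGraph V) (v : V) : ℕ :=
  Nat.card {u : V // G.adj v u ∨ G.adj u v}

/-- The underlying simple graph of an oriented graph. -/
def toSimple (G : OGraph V) : SimpleGraph V where
  Adj u v := G.adj u v ∨ G.adj v u
  symm := by
    constructor
    rintro u v (h | h)
    · exact Or.inr h
    · exact Or.inl h
  loopless := by
    constructor
    rintro v (h | h) <;> exact G.irrefl' v h

/-- A subgraph of an oriented graph `G`: a set of vertices together with a
subrelation of the arc relation supported on that set. -/
structure Subgraph (G : OGraph V) where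
  verts : Set V
  adj : V → V → Prop
  adj_sub : ∀ u v, adj u v → G.adj u v
  mem_left : ∀ u v, adj u v → u ∈ verts
  mem_right : ∀ u v, adj u v → v ∈ verts

/-- A subgraph, viewed as an oriented graph on its vertex set. -/
def Subgraph.toOGraph {G : OGraph V} (K : G.Subgraph) : OGraph K.verts where
  adj u v := K.adj u.1 v.1
  irrefl' := fun v h => G.irrefl' v.1 (K.adj_sub _ _ h)
  asymm' := fun u v h1 h2 => G.asymm' u.1 v.1 (K.adj_sub _ _ h1) (K.adj_sub _ _ h2)

/-- A subgraph is proper if it misses a vertex or an arc of `G`. -/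
def Subgraph.Proper {G : OGraph V} (K : G.Subgraph) : Prop :=
  K.verts ≠ Set.univ ∨ ∃ u v, G.adj u v ∧ ¬ K.adj u v

/-- The number of arcs of a subgraph. -/
noncomputable def Subgraph.arcCount {G : OGraph V} (K : G.Subgraph) : ℕ :=
  Nat.card {p : V × V // K.adj p.1 p.2}

/-- The potential `ρ` of a subgraph. -/
noncomputable def Subgraph.potential {G : OGraph V} (K : G.Subgraph) : ℤ :=
  15 * (Nat.card K.verts : ℤ) - 13 * (K.arcCount : ℤ)

/-- The average-degree quantity `2|E(K)|/|V(K)|` of a subgraph. -/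
noncomputable def Subgraph.density {G : OGraph V} (K : G.Subgraph) : ℚ :=
  (2 * (K.arcCount : ℚ)) / (Nat.card K.verts : ℚ)

/-- The maximum average degree of `G` is strictly less than `r`. -/
def MadLT (G : OGraph V) (r : ℚ) : Prop :=
  ∀ K : G.Subgraph, K.verts.Nonempty → K.density < r

/-- The maximum average degree of `G` equals `r`. -/
def MadEq (G : OGraph V) (r : ℚ) : Prop :=
  (∀ K : G.Subgraph, K.verts.Nonempty → K.density ≤ r) ∧
  (∃ K : G.Subgraph, K.verts.Nonempty ∧ K.density = r)

/-- `G` is pushably 3-critical: it is not pushably 3-colorable but every proper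
subgraph of it is. -/
def Pushably3Critical (G : OGraph V) : Prop :=
  ¬ G.PushablyColorable 3 ∧
  ∀ K : G.Subgraph, K.Proper → K.toOGraph.PushablyColorable 3

/-- A `k`-chain: a path with `k` arcs in the underlying graph whose endpoints are
`3⁺`-vertices and whose internal vertices are `2`-vertices. -/
noncomputable def IsChain (G : OGraph V) (k : ℕ) (w : Fin (k+1) → V) : Prop :=
  Function.Injective w ∧
  (∀ i : Fin k, G.toSimple.Adj (w i.castSucc) (w i.succ)) ∧
  3 ≤ G.degree (w 0) ∧ 3 ≤ G.degree (w (Fin.last k)) ∧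
  (∀ i : Fin (k+1), i.val ≠ 0 → i.val ≠ k → G.degree (w i) = 2)

/-- `x` and `y` are `k`-chain-adjacent. -/
noncomputable def ChainAdj (G : OGraph V) (k : ℕ) (x y : V) : Prop :=
  ∃ w : Fin (k+1) → V, IsChain G k w ∧ w 0 = x ∧ w (Fin.last k) = y

/-- A chain incident to `v` having exactly `t` internal `2`-vertices
(that is, a `(t+1)`-chain starting at `v`). -/
noncomputable def IsChainFrom (G : OGraph V) (t : ℕ) (v : V) (w : Fin (t+2) → V) : Prop :=
  IsChain G (t+1) w ∧ w 0 = v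

/-- `v` is a `3_{t1,t2,t3}`-vertex: a 3-vertex whose three incident chains contain
`t1`, `t2` and `t3` internal 2-vertices respectively. -/
noncomputable def Is3Type (G : OGraph V) (v : V) (t1 t2 t3 : ℕ) : Prop :=
  G.degree v = 3 ∧
  ∃ (w1 : Fin (t1+2) → V) (w2 : Fin (t2+2) → V) (w3 : Fin (t3+2) → V),
    IsChainFrom G t1 v w1 ∧ IsChainFrom G t2 v w2 ∧ IsChainFrom G t3 v w3 ∧
    w1 1 ≠ w2 1 ∧ w1 1 ≠ w3 1 ∧ w2 1 ≠ w3 1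

/-- `v` is a `3^t`-vertex: a 3-vertex whose incident chains contain exactly `t`
internal 2-vertices in total. -/
noncomputable def Is3Tot (G : OGraph V) (v : V) (t : ℕ) : Prop :=
  ∃ t1 t2 t3 : ℕ, t1 + t2 + t3 = t ∧ Is3Type G v t1 t2 t3

/-- `v` is a `3^{≥t}`-vertex: a 3-vertex whose incident chains contain at least `t`
internal 2-vertices in total. -/
noncomputable def Is3TotGe (G : OGraph V) (v : V) (t : ℕ) : Prop :=
  ∃ t1 t2 t3 : ℕ, t ≤ t1 + t2 + t3 ∧ Is3Type G v t1 t2 t3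

/-- A 2-dipath `ℓ`-`L(p,q)`-labeling of `G`. -/
def Is2DipathLabeling (G : OGraph V) (p q ℓ : ℕ) (g : V → ℕ) : Prop :=
  (∀ v, g v ≤ ℓ) ∧
  (∀ u v, G.toSimple.Adj u v → (p : ℤ) ≤ |(g u : ℤ) - (g v : ℤ)|) ∧
  (∀ u w v, G.adj u w → G.adj w v → (q : ℤ) ≤ |(g u : ℤ) - (g v : ℤ)|)

/-- An oriented coloring of `G`. -/
def IsOrientedColoring (G : OGraph V) (g : V → ℕ) : Prop :=
  (∀ u v, G.adj u v → g u ≠ g v) ∧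
  (∀ u v w x, G.adj u v → G.adj w x → g u = g x → g v ≠ g w)

/-- An oriented `ℓ`-`L(p,q)`-labeling: a 2-dipath `ℓ`-`L(p,q)`-labeling that is
also an oriented coloring. -/
def IsOrientedLabeling (G : OGraph V) (p q ℓ : ℕ) (g : V → ℕ) : Prop :=
  Is2DipathLabeling G p q ℓ g ∧ IsOrientedColoring G g

/-- The 2-dipath `L(p,q)` span of `G`. -/
noncomputable def twoDipathSpan (G : OGraph V) (p q : ℕ) : ℕ :=
  sInf {ℓ | ∃ g : V → ℕ, Is2DipathLabeling G p q ℓ g}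

/-- The oriented `L(p,q)` span of `G`. -/
noncomputable def orientedSpan (G : OGraph V) (p q : ℕ) : ℕ :=
  sInf {ℓ | ∃ g : V → ℕ, IsOrientedLabeling G p q ℓ g}

/-- `M` is of the form `P_k(K)`: `M` is obtained from the subgraph `K` by adding a
new oriented path with `k` arcs whose endpoints are identified with (not
necessarily distinct) vertices of `K`. -/
def IsPkOf (M : OGraph V) (K : M.Subgraph) (k : ℕ) : Prop :=
  ∃ (w : Fin (k+1) → V) (ε : Fin k → Bool),
    w 0 ∈ K.verts ∧ w (Fin.last k) ∈ K.verts ∧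
    (∀ i : Fin (k+1), i.val ≠ 0 → i.val ≠ k → w i ∉ K.verts) ∧
    (∀ i j : Fin (k+1), i.val ≠ 0 → i.val ≠ k → j.val ≠ 0 → j.val ≠ k →
        w i = w j → i = j) ∧
    (∀ v : V, v ∈ K.verts ∨ ∃ i : Fin (k+1), i.val ≠ 0 ∧ i.val ≠ k ∧ w i = v) ∧
    (∀ u v : V, M.adj u v ↔ (K.adj u v ∨ ∃ i : Fin k,
      (ε i = true ∧ u = w i.castSucc ∧ v = w i.succ) ∨
      (ε i = false ∧ u = w i.succ ∧ v = w i.castSucc)))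

end OGraph

/-- Build an oriented graph on `Fin n` from an explicit list of arcs. -/
def OGraph.ofList (n : ℕ) (l : List (Fin n × Fin n))
    (h1 : ∀ v : Fin n, (v, v) ∉ l)
    (h2 : ∀ u v : Fin n, (u, v) ∈ l → (v, u) ∉ l) : OGraph (Fin n) where
  adj u v := (u, v) ∈ l
  irrefl' := h1
  asymm' := h2

/-- The directed 3-cycle on `ZMod 3`, with arcs `i → i+1`. -/
def C3vec : OGraph (ZMod 3) where
  adj i j := j = i + 1
  irrefl' := by decide
  asymm' := by decide

/-- The anti-twinned oriented graph `AT(H)`, on vertex set `W × Bool`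
(`(v,false)` is `v` and `(v,true)` is `v'`). -/
def ATgraph {W : Type} (H : OGraph W) : OGraph (W × Bool) where
  adj p q := (p.2 = q.2 ∧ H.adj p.1 q.1) ∨ (p.2 ≠ q.2 ∧ H.adj q.1 p.1)
  irrefl' := by
    rintro ⟨v, b⟩ (⟨_, h⟩ | ⟨h, _⟩)
    · exact H.irrefl' v h
    · exact h rfl
  asymm' := by
    rintro ⟨u, a⟩ ⟨v, b⟩ (⟨e1, h1⟩ | ⟨e1, h1⟩) (⟨e2, h2⟩ | ⟨e2, h2⟩)
    · exact H.asymm' _ _ h1 h2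
    · exact e2 e1.symm
    · exact e1 e2.symm
    · exact H.asymm' _ _ h2 h1

/-- `AT(C⃗₃)`. -/
def ATC3 : OGraph (ZMod 3 × Bool) := ATgraph C3vec

/-- `C⃗₋₄`: the orientation of the 4-cycle with arcs v1→v2, v2→v3, v1→v4, v3→v4
(vertices v1,v2,v3,v4 are 0,1,2,3). -/
def Cminus4 : OGraph (Fin 4) :=
  OGraph.ofList 4 [(0,1),(1,2),(0,3),(2,3)] (by decide) (by decide)

/-- `E⃗₁`: vertices v1,v2,v3,v4 = 0,1,2,3, a1,a2,a3 = 4,5,6, b1,b2,b3 = 7,8,9,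
c1,c2,c3 = 10,11,12. -/
def E1 : OGraph (Fin 13) :=
  OGraph.ofList 13
    [(2,3),(3,0),(3,1),(0,4),(4,5),(5,6),(6,2),(1,7),(7,8),(8,9),(9,2),
     (0,10),(10,11),(11,12),(1,12)] (by decide) (by decide)

/-- `E⃗₂`: vertices v1,v2,v3,v4 = 0,1,2,3, x1,x2,x3 = 4,5,6, a1,a2 = 7,8,
b1,b2 = 9,10, c1,c2 = 11,12. -/
def E2 : OGraph (Fin 13) :=
  OGraph.ofList 13
    [(0,4),(4,2),(2,5),(5,1),(1,6),(6,0),(0,7),(7,8),(8,3),(1,9),(9,10),(10,3),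
     (2,11),(11,12),(12,3)] (by decide) (by decide)

/-- `E⃗₃`: vertices v1,v2,v3,v4 = 0,1,2,3, x1,x2 = 4,5, w1,w2,w3 = 6,7,8,
a1,a2 = 9,10, b1,b2 = 11,12. -/
def E3 : OGraph (Fin 13) :=
  OGraph.ofList 13
    [(2,4),(4,0),(2,5),(5,1),(6,0),(6,7),(7,8),(8,1),(0,9),(9,10),(10,3),
     (1,11),(11,12),(12,3),(3,2)] (by decide) (by decide)

/-- The oriented graph `F⃗` on 12 vertices and 14 arcs: vertices
v1,v2,v3,v4,u,p1,p2,p3,a1,a2,b1,b2 = 0,…,11. -/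
def Fgraph : OGraph (Fin 12) :=
  OGraph.ofList 12
    [(2,0),(2,1),(3,4),(4,2),(0,5),(6,5),(6,7),(7,1),(0,8),(8,9),(9,3),
     (1,10),(10,11),(11,3)] (by decide) (by decide)

/-- The oriented path on vertices `0,…,n` of `Fin (n+1)`, where the `i`-th edge
joins `i` and `i+1` and is oriented forwards iff `ε i = true`. -/
def pathO (n : ℕ) (ε : Fin n → Bool) : OGraph (Fin (n+1)) where
  adj u v := ∃ i : Fin n,
    (ε i = true ∧ u = i.castSucc ∧ v = i.succ) ∨
    (ε i = false ∧ u = i.succ ∧ v = i.castSucc)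
  irrefl' := by
    rintro v ⟨i, (⟨_, h1, h2⟩ | ⟨_, h1, h2⟩)⟩ <;>
    · have h := congrArg Fin.val (h1.symm.trans h2)
      simp only [Fin.val_succ, Fin.coe_castSucc] at h
      omega
  asymm' := by
    rintro u v ⟨i, hi⟩ ⟨j, hj⟩
    rcases hi with ⟨ei, h1, h2⟩ | ⟨ei, h1, h2⟩ <;>
      rcases hj with ⟨ej, h3, h4⟩ | ⟨ej, h3, h4⟩
    · have e1 := congrArg Fin.val (h1.symm.trans h4)
      have e2 := congrArg Fin.val (h2.symm.trans h3)
      simp only [Fin.val_succ, Fin.coe_castSucc] at e1 e2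
      omega
    · have e1 := congrArg Fin.val (h1.symm.trans h4)
      have e2 := congrArg Fin.val (h2.symm.trans h3)
      simp only [Fin.val_succ, Fin.coe_castSucc] at e1 e2
      have hij : i = j := Fin.ext (by omega)
      subst hij
      rw [ei] at ej
      exact Bool.noConfusion ej
    · have e1 := congrArg Fin.val (h1.symm.trans h4)
      have e2 := congrArg Fin.val (h2.symm.trans h3)
      simp only [Fin.val_succ, Fin.coe_castSucc] at e1 e2
      have hij : i = j := Fin.ext (by omega)
      subst hij
      rw [ei] at ej
      exact Bool.noConfusion ej
    · have e1 := congrArg Fin.val (h1.symm.trans h4)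
      have e2 := congrArg Fin.val (h2.symm.trans h3)
      simp only [Fin.val_succ, Fin.coe_castSucc] at e1 e2
      omega

/-- Given the oriented path `pathO n ε` from `x = 0` to `y = Fin.last n`,
the color `c` is allowed at `y` when `x` gets color `i`: some push of a set of
internal vertices admits a homomorphism to `C⃗₃` sending `x` to `i` and `y` to `c`. -/
def allowedColor (n : ℕ) (ε : Fin n → Bool) (i c : ZMod 3) : Prop :=
  ∃ S : Set (Fin (n+1)),
    (∀ v ∈ S, v ≠ 0 ∧ v ≠ Fin.last n) ∧
    ∃ f : Fin (n+1) → ZMod 3,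
      OGraph.Hom ((pathO n ε).push S) C3vec f ∧ f 0 = i ∧ f (Fin.last n) = c

open Classical in
/-- The number of pairs in the list `l` that are arcs of `G` (used to count forward
or backward arcs along a traversal of a cycle). -/
noncomputable def fwdCount {V : Type} (G : OGraph V) (l : List (V × V)) : ℕ :=
  (l.map fun p => if G.adj p.1 p.2 then 1 else 0).sum

/-- `M` is a minimal counterexample: a pushably 3-critical oriented graph, not
push-equivalent to any of `C⃗₋₄, E⃗₁, E⃗₂, E⃗₃`, with potential at least `−1`, and
minimal with respect to `|V| + |A|` among all such graphs. -/
def MinimalCE {V : Type} (M : OGraph V) : Prop :=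
  OGraph.Pushably3Critical M ∧
  ¬ M.PushEquiv Cminus4 ∧ ¬ M.PushEquiv E1 ∧ ¬ M.PushEquiv E2 ∧ ¬ M.PushEquiv E3 ∧
  (-1 : ℤ) ≤ M.potential ∧
  ∀ (W : Type), Finite W → ∀ G : OGraph W,
    OGraph.Pushably3Critical G → (-1 : ℤ) ≤ G.potential →
    Nat.card W + G.arcCount < Nat.card V + M.arcCount →
    (G.PushEquiv Cminus4 ∨ G.PushEquiv E1 ∨ G.PushEquiv E2 ∨ G.PushEquiv E3)

section AuxForF

open OGraph

/-- The directed triangle on `Fin 3`. -/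
def C3f : OGraph (Fin 3) where
  adj i j := j = i + 1
  irrefl' := by decide
  asymm' := by decide

instance decFAdj (u v : Fin 12) : Decidable (Fgraph.adj u v) :=
  decidable_of_iff ((u, v) ∈
    ([(2,0),(2,1),(3,4),(4,2),(0,5),(6,5),(6,7),(7,1),(0,8),(8,9),(9,3),
      (1,10),(10,11),(11,3)] : List (Fin 12 × Fin 12))) Iff.rfl

/-- `y - x ∈ {1, 2}` in `Fin 6`: the Z₆-encoding of a pushed C₃-arc. -/
def step6 (x y : Fin 6) : Prop := y - x = 1 ∨ y - x = 2

instance decStep6 (x y : Fin 6) : Decidable (step6 x y) :=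
  decidable_of_iff (y - x = 1 ∨ y - x = 2) Iff.rfl

def enc6 (a : Fin 3) (p : Bool) : Fin 6 := ![![0,3],![2,5],![4,1]] a (cond p 1 0)
def dec1 (x : Fin 6) : Fin 3 := ![0,2,1,0,2,1] x
def dec2 (x : Fin 6) : Bool := ![false,true,false,true,false,true] x

lemma enc_same : ∀ (a b : Fin 3) (p : Bool), b = a + 1 → step6 (enc6 a p) (enc6 b p) := by decide
lemma enc_diff : ∀ (a b : Fin 3) (p q : Bool), p ≠ q → a = b + 1 →
    step6 (enc6 a p) (enc6 b q) := by decide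
lemma dec_same : ∀ x y : Fin 6, step6 x y → dec2 x = dec2 y → dec1 y = dec1 x + 1 := by decide
lemma dec_diff : ∀ x y : Fin 6, step6 x y → dec2 x ≠ dec2 y → dec1 x = dec1 y + 1 := by decide

lemma stepP : ∀ a b c d e : Fin 6, step6 a b → step6 c b → step6 c d → step6 d e →
    e ≠ a := by decide
lemma step3 : ∀ a b c d : Fin 6, step6 a b → step6 b c → step6 c d →
    (d - a = 3 ∨ d - a = 4 ∨ d - a = 5 ∨ d - a = 0) := by decide
lemma step2 : ∀ a b c : Fin 6, step6 a b → step6 b c →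
    (c - a = 2 ∨ c - a = 3 ∨ c - a = 4) := by decide
lemma finalContra : ∀ A B C D : Fin 6, step6 C A → step6 C B → B ≠ A →
    (D - A = 3 ∨ D - A = 4 ∨ D - A = 5 ∨ D - A = 0) →
    (D - B = 3 ∨ D - B = 4 ∨ D - B = 5 ∨ D - B = 0) →
    (C - D = 2 ∨ C - D = 3 ∨ C - D = 4) → False := by decide

set_option maxRecDepth 100000 in
/-- Any oriented graph on 3 vertices can be pushed into the directed triangle. -/
lemma tourn3 : ∀ b : Fin 3 → Fin 3 → Bool, (∀ i, b i i = false) →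
    (∀ i j, b i j = true → b j i = false) →
    ∃ s : Fin 3 → Bool, ∃ g : Fin 3 → Fin 3, ∀ i j, b i j = true →
      ((s i = s j → g j = g i + 1) ∧ (s i ≠ s j → g i = g j + 1)) := by decide

lemma hom_push_lift {V W : Type} (G : OGraph V) (H : OGraph W) (f : V → W)
    (h : G.Hom H f) (T : Set W) : (G.push (f ⁻¹' T)).Hom (H.push T) f := by
  rintro u v (⟨hiff, ha⟩ | ⟨hn, ha⟩)
  · exact Or.inl ⟨hiff, h _ _ ha⟩
  · exact Or.inr ⟨hn, h _ _ ha⟩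

lemma push_collapse {V : Type} (G : OGraph V) (S T : Set V) (u v : V)
    (h : (G.push {x | ¬ (x ∈ S ↔ x ∈ T)}).adj u v) : ((G.push S).push T).adj u v := by
  simp only [OGraph.push, Set.mem_setOf_eq] at h ⊢
  tauto

/-- No push of `F⃗` maps homomorphically to the directed triangle. -/
lemma no_push_C3 : ∀ (S : Set (Fin 12)) (g : Fin 12 → Fin 3),
    ¬ (Fgraph.push S).Hom C3f g := by
  classical
  intro S g hg
  have key : ∀ u v : Fin 12, Fgraph.adj u v →
      step6 (enc6 (g u) (decide (u ∈ S))) (enc6 (g v) (decide (v ∈ S))) := by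
    intro u v h
    by_cases hu : u ∈ S <;> by_cases hv : v ∈ S
    · have h1 : g v = g u + 1 := hg u v (Or.inl ⟨iff_of_true hu hv, h⟩)
      rw [decide_eq_true hu, decide_eq_true hv]
      exact enc_same _ _ _ h1
    · have h1 : g u = g v + 1 := hg v u (Or.inr ⟨fun hiff => hv (hiff.mpr hu), h⟩)
      rw [decide_eq_true hu, decide_eq_false hv]
      exact enc_diff _ _ _ _ (by decide) h1
    · have h1 : g u = g v + 1 := hg v u (Or.inr ⟨fun hiff => hu (hiff.mp hv), h⟩)
      rw [decide_eq_false hu, decide_eq_true hv]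
      exact enc_diff _ _ _ _ (by decide) h1
    · have h1 : g v = g u + 1 := hg u v (Or.inl ⟨iff_of_false hu hv, h⟩)
      rw [decide_eq_false hu, decide_eq_false hv]
      exact enc_same _ _ _ h1
  exact finalContra _ _ _ _ (key 2 0 (by decide)) (key 2 1 (by decide))
    (stepP _ _ _ _ _ (key 0 5 (by decide)) (key 6 5 (by decide)) (key 6 7 (by decide))
      (key 7 1 (by decide)))
    (step3 _ _ _ _ (key 0 8 (by decide)) (key 8 9 (by decide)) (key 9 3 (by decide)))
    (step3 _ _ _ _ (key 1 10 (by decide)) (key 10 11 (by decide)) (key 11 3 (by decide)))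
    (step2 _ _ _ (key 3 4 (by decide)) (key 4 2 (by decide)))

lemma Fgraph_not_colorable : ¬ Fgraph.PushablyColorable 3 := by
  classical
  rintro ⟨H, S, f, hf⟩
  obtain ⟨s, g, hsg⟩ := tourn3 (fun i j => decide (H.adj i j))
    (fun i => decide_eq_false (H.irrefl' i))
    (fun i j hb => decide_eq_false (H.asymm' i j (of_decide_eq_true hb)))
  have hImp : ∀ i j : Fin 3, H.adj i j →
      ((s i = s j → g j = g i + 1) ∧ (s i ≠ s j → g i = g j + 1)) :=
    fun i j ha => hsg i j (decide_eq_true ha)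
  have hgT : (H.push {i | s i = true}).Hom C3f g := by
    rintro i j (⟨hiff, ha⟩ | ⟨hn, ha⟩)
    · have hsij : s i = s j := by
        simp only [Set.mem_setOf_eq] at hiff
        cases hb : s i <;> cases hc : s j <;> simp_all
    
      exact (hImp i j ha).1 hsij
    · have hsij : s j ≠ s i := by
        simp only [Set.mem_setOf_eq] at hn
        intro he
        exact hn (by rw [he])
      exact (hImp j i ha).2 hsij
  have hcomp : (Fgraph.push {x | ¬ (x ∈ S ↔ x ∈ f ⁻¹' {i | s i = true})}).Hom C3f (g ∘ f) := by
    intro u v h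
    exact hgT _ _ (hom_push_lift _ _ f hf _ u v (push_collapse Fgraph S _ u v h))
  exact no_push_C3 _ _ hcomp

def psiTbl : Fin 12 × Fin 12 → Fin 12 → Fin 6 := fun p =>
  if p = (2,0) then ![0,1,0,4,5,1,5,0,1,2,2,3]
  else if p = (2,1) then ![0,1,4,0,2,1,5,0,2,4,2,4]
  else if p = (3,4) then ![0,1,5,0,3,1,5,0,2,4,2,4]
  else if p = (4,2) then ![0,1,5,0,1,1,5,0,2,4,2,4]
  else if p = (0,5) then ![0,0,4,0,2,0,4,5,2,4,2,4]
  else if p = (6,5) then ![0,0,4,0,2,1,2,4,2,4,2,4]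
  else if p = (6,7) then ![0,0,4,0,2,1,0,4,2,4,2,4]
  else if p = (7,1) then ![0,0,4,0,2,1,0,1,2,4,2,4]
  else if p = (0,8) then ![0,1,5,1,3,1,5,0,3,5,3,5]
  else if p = (8,9) then ![0,1,5,1,3,1,5,0,1,0,3,5]
  else if p = (9,3) then ![0,1,5,1,3,1,5,0,1,2,3,5]
  else if p = (1,10) then ![0,1,5,3,4,1,5,0,1,2,0,1]
  else if p = (10,11) then ![0,1,5,3,4,1,5,0,1,2,2,1]
  else ![0,1,5,3,4,1,5,0,1,2,2,3]

set_option maxRecDepth 100000 in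
lemma psiTbl_ok : ∀ p : Fin 12 × Fin 12, Fgraph.adj p.1 p.2 →
    ∀ q : Fin 12 × Fin 12, Fgraph.adj q.1 q.2 → q ≠ p →
    step6 (psiTbl p q.1) (psiTbl p q.2) := by decide

def arcFor : Fin 12 → Fin 12 × Fin 12 :=
  ![(2,0),(2,1),(2,0),(3,4),(3,4),(0,5),(6,5),(6,7),(0,8),(8,9),(1,10),(10,11)]

lemma arcFor_ok : ∀ w : Fin 12,
    Fgraph.adj (arcFor w).1 (arcFor w).2 ∧ ((arcFor w).1 = w ∨ (arcFor w).2 = w) := by decide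

lemma Fgraph_subgraphs_colorable :
    ∀ K : Fgraph.Subgraph, K.Proper → K.toOGraph.PushablyColorable 3 := by
  intro K hK
  obtain ⟨u0, v0, ha0, hm0⟩ : ∃ u0 v0, Fgraph.adj u0 v0 ∧ ¬ K.adj u0 v0 := by
    rcases hK with h | ⟨u, v, ha, hna⟩
    · obtain ⟨w, hw⟩ := (Set.ne_univ_iff_exists_notMem _).mp h
      refine ⟨(arcFor w).1, (arcFor w).2, (arcFor_ok w).1, fun hadj => ?_⟩
      rcases (arcFor_ok w).2 with h1 | h1
      · exact hw (h1 ▸ K.mem_left _ _ hadj)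
      · exact hw (h1 ▸ K.mem_right _ _ hadj)
    · exact ⟨u, v, ha, hna⟩
  set ψ : Fin 12 → Fin 6 := psiTbl (u0, v0) with hψ
  have hstep : ∀ u v : Fin 12, K.adj u v → step6 (ψ u) (ψ v) := by
    intro u v h
    refine psiTbl_ok (u0, v0) ha0 (u, v) (K.adj_sub u v h) ?_
    intro he
    injection he with he1 he2
    subst he1; subst he2
    exact hm0 h
  refine ⟨C3f, {x | dec2 (ψ x.1) = true}, fun x => dec1 (ψ x.1), ?_⟩
  rintro u v (⟨hiff, ha⟩ | ⟨hn, ha⟩)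
  · have hst := hstep u.1 v.1 ha
    have h2 : dec2 (ψ u.1) = dec2 (ψ v.1) := by
      simp only [Set.mem_setOf_eq] at hiff
      cases hb : dec2 (ψ u.1) <;> cases hc : dec2 (ψ v.1) <;> simp_all
    exact dec_same _ _ hst h2
  · have hst := hstep v.1 u.1 ha
    have h2 : dec2 (ψ v.1) ≠ dec2 (ψ u.1) := by
      simp only [Set.mem_setOf_eq] at hn
      intro he
      exact hn (by rw [he])
    exact dec_diff _ _ hst h2

end AuxForF

set_option maxRecDepth 1000000 in
/-- The oriented graph `F⃗` on 12 vertices and 14 arcs is pushably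
3-critical, and it attains the density bound with equality: `13|A| = 15|V| + 2`. -/
theorem Fgraph_pushably3Critical_and_tight :
    OGraph.Pushably3Critical Fgraph ∧
    13 * Fgraph.arcCount = 15 * Nat.card (Fin 12) + 2 := by
  refine ⟨⟨Fgraph_not_colorable, Fgraph_subgraphs_colorable⟩, ?_⟩
  have hcard : Fgraph.arcCount = 14 := by
    rw [OGraph.arcCount, Nat.card_eq_fintype_card]
    decide
  rw [hcard]
  simp [Nat.card_eq_fintype_card]
end

section
/- The oriented graph C⃗₋₄ (the orientation of the 4-cycle on vertices v1,v2,v3,v4 with arcs v1→v2, v2→v3, v1→v4, v3→v4) is pushably 3-critical: it is not pushably 3-colorable, but every proper subgraph of it is pushably 3-colorable. -/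
set_option maxHeartbeats 1000000

def T3col : OGraph (Fin 3) :=
  OGraph.ofList 3 [(0,1),(1,2),(2,0)] (by decide) (by decide)

lemma subgraph_colorable_aux (K : Cminus4.Subgraph) (u0 v0 : Fin 4) (f : Fin 4 → Fin 3)
    (hnK : ¬ K.adj u0 v0)
    (hdec : ∀ a b : Fin 4, (a, b) ∈ [((0:Fin 4),(1:Fin 4)),(1,2),(0,3),(2,3)] →
      ¬(a = u0 ∧ b = v0) → (f a, f b) ∈ [((0:Fin 3),(1:Fin 3)),(1,2),(2,0)]) :
    K.toOGraph.PushablyColorable 3 := by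
  refine ⟨T3col, ∅, fun x => f x.1, ?_⟩
  rintro ⟨a, ha⟩ ⟨b, hb⟩ hadj
  rcases hadj with ⟨-, hab⟩ | ⟨hn, -⟩
  · exact hdec a b (K.adj_sub a b hab) (fun h => hnK (by rw [← h.1, ← h.2]; exact hab))
  · exact absurd Iff.rfl hn

/-- `C⃗₋₄` is pushably 3-critical: it is not pushably 3-colorable,
but every proper subgraph of it is pushably 3-colorable. -/
theorem Cminus4_pushably3Critical :
    ¬ Cminus4.PushablyColorable 3 ∧
    ∀ K : Cminus4.Subgraph, K.Proper → K.toOGraph.PushablyColorable 3 := by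
  constructor
  · rintro ⟨H, S, f, hf⟩
    have arc01 : Cminus4.adj 0 1 := List.Mem.head _
    have arc12 : Cminus4.adj 1 2 := List.Mem.tail _ (List.Mem.head _)
    have arc03 : Cminus4.adj 0 3 := List.Mem.tail _ (List.Mem.tail _ (List.Mem.head _))
    have arc23 : Cminus4.adj 2 3 := List.Mem.tail _ (List.Mem.tail _ (List.Mem.tail _ (List.Mem.head _)))
    have d01 : (((0:Fin 4) ∈ S) ↔ ((1:Fin 4) ∈ S)) → H.adj (f 0) (f 1) :=
      fun hq => hf 0 1 (Or.inl ⟨hq, arc01⟩)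
    have d01' : ¬(((0:Fin 4) ∈ S) ↔ ((1:Fin 4) ∈ S)) → H.adj (f 1) (f 0) :=
      fun hq => hf 1 0 (Or.inr ⟨fun h => hq h.symm, arc01⟩)
    have d12 : (((1:Fin 4) ∈ S) ↔ ((2:Fin 4) ∈ S)) → H.adj (f 1) (f 2) :=
      fun hq => hf 1 2 (Or.inl ⟨hq, arc12⟩)
    have d12' : ¬(((1:Fin 4) ∈ S) ↔ ((2:Fin 4) ∈ S)) → H.adj (f 2) (f 1) :=
      fun hq => hf 2 1 (Or.inr ⟨fun h => hq h.symm, arc12⟩)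
    have d03 : (((0:Fin 4) ∈ S) ↔ ((3:Fin 4) ∈ S)) → H.adj (f 0) (f 3) :=
      fun hq => hf 0 3 (Or.inl ⟨hq, arc03⟩)
    have d03' : ¬(((0:Fin 4) ∈ S) ↔ ((3:Fin 4) ∈ S)) → H.adj (f 3) (f 0) :=
      fun hq => hf 3 0 (Or.inr ⟨fun h => hq h.symm, arc03⟩)
    have d23 : (((2:Fin 4) ∈ S) ↔ ((3:Fin 4) ∈ S)) → H.adj (f 2) (f 3) :=
      fun hq => hf 2 3 (Or.inl ⟨hq, arc23⟩)
    have d23' : ¬(((2:Fin 4) ∈ S) ↔ ((3:Fin 4) ∈ S)) → H.adj (f 3) (f 2) :=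
      fun hq => hf 3 2 (Or.inr ⟨fun h => hq h.symm, arc23⟩)
    have hcol : ∀ g : Fin 4 → Fin 3, g 0 = g 1 ∨ g 1 = g 2 ∨ g 0 = g 3 ∨ g 2 = g 3 ∨
        g 0 = g 2 ∨ g 1 = g 3 := by decide
    rcases hcol f with h | h | h | h | h | h
    · rw [h] at d01 d01'
      exact (em _).elim (fun hq => H.irrefl' _ (d01 hq)) (fun hq => H.irrefl' _ (d01' hq))
    · rw [h] at d12 d12'
      exact (em _).elim (fun hq => H.irrefl' _ (d12 hq)) (fun hq => H.irrefl' _ (d12' hq))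
    · rw [h] at d03 d03'
      exact (em _).elim (fun hq => H.irrefl' _ (d03 hq)) (fun hq => H.irrefl' _ (d03' hq))
    · rw [h] at d23 d23'
      exact (em _).elim (fun hq => H.irrefl' _ (d23 hq)) (fun hq => H.irrefl' _ (d23' hq))
    · rw [h] at d01 d01' d03 d03'
      have asym1 : ¬(H.adj (f 2) (f 1) ∧ H.adj (f 1) (f 2)) := fun ⟨x, y⟩ => H.asymm' _ _ x y
      have asym2 : ¬(H.adj (f 2) (f 3) ∧ H.adj (f 3) (f 2)) := fun ⟨x, y⟩ => H.asymm' _ _ x y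
      by_cases h02 : (((0:Fin 4) ∈ S) ↔ ((2:Fin 4) ∈ S))
      · by_cases q01 : (((0:Fin 4) ∈ S) ↔ ((1:Fin 4) ∈ S))
        · exact asym1 ⟨d01 q01, d12 (q01.symm.trans h02)⟩
        · exact asym1 ⟨d12' (fun q12 => q01 (h02.trans q12.symm)), d01' q01⟩
      · by_cases q03 : (((0:Fin 4) ∈ S) ↔ ((3:Fin 4) ∈ S))
        · exact asym2 ⟨d03 q03, d23' (fun q23 => h02 (q03.trans q23.symm))⟩
        · have q23 : (((2:Fin 4) ∈ S) ↔ ((3:Fin 4) ∈ S)) := by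
            rcases em ((0:Fin 4) ∈ S) with p0 | p0 <;> rcases em ((2:Fin 4) ∈ S) with p2 | p2 <;>
              rcases em ((3:Fin 4) ∈ S) with p3 | p3 <;> first
                | exact Iff.intro (fun _ => p3) (fun _ => p2)
                | exact absurd (Iff.intro (fun _ => p2) (fun _ => p0)) h02
                | exact absurd (Iff.intro (fun _ => p3) (fun _ => p0)) q03
                | exact absurd (Iff.intro (fun h => absurd h p0) (fun h => absurd h p2)) h02
                | exact absurd (Iff.intro (fun h => absurd h p0) (fun h => absurd h p3)) q03
                | exact Iff.intro (fun h => absurd h p2) (fun h => absurd h p3)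
          exact asym2 ⟨d23 q23, d03' q03⟩
    · rw [h] at d01 d01' d12 d12'
      have asym1 : ¬(H.adj (f 0) (f 3) ∧ H.adj (f 3) (f 0)) := fun ⟨x, y⟩ => H.asymm' _ _ x y
      have asym2 : ¬(H.adj (f 3) (f 2) ∧ H.adj (f 2) (f 3)) := fun ⟨x, y⟩ => H.asymm' _ _ x y
      by_cases h13 : (((1:Fin 4) ∈ S) ↔ ((3:Fin 4) ∈ S))
      · by_cases q12 : (((1:Fin 4) ∈ S) ↔ ((2:Fin 4) ∈ S))
        · exact asym2 ⟨d12 q12, d23 (q12.symm.trans h13)⟩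
        · exact asym2 ⟨d23' (fun q23 => q12 (h13.trans q23.symm)), d12' q12⟩
      · by_cases q03 : (((0:Fin 4) ∈ S) ↔ ((3:Fin 4) ∈ S))
        · exact asym1 ⟨d03 q03, d01' (fun q01 => h13 (q01.symm.trans q03))⟩
        · have q01 : (((0:Fin 4) ∈ S) ↔ ((1:Fin 4) ∈ S)) := by
            rcases em ((0:Fin 4) ∈ S) with p0 | p0 <;> rcases em ((1:Fin 4) ∈ S) with p1 | p1 <;>
              rcases em ((3:Fin 4) ∈ S) with p3 | p3 <;> first
                | exact Iff.intro (fun _ => p1) (fun _ => p0)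
                | exact absurd (Iff.intro (fun _ => p3) (fun _ => p0)) q03
                | exact absurd (Iff.intro (fun _ => p3) (fun _ => p1)) h13
                | exact absurd (Iff.intro (fun h => absurd h p0) (fun h => absurd h p3)) q03
                | exact absurd (Iff.intro (fun h => absurd h p1) (fun h => absurd h p3)) h13
                | exact Iff.intro (fun h => absurd h p0) (fun h => absurd h p1)
          exact asym1 ⟨d01 q01, d03' q03⟩
  · intro K hK
    have arc01 : Cminus4.adj 0 1 := List.Mem.head _
    have arc12 : Cminus4.adj 1 2 := List.Mem.tail _ (List.Mem.head _)
    have arc03 : Cminus4.adj 0 3 := List.Mem.tail _ (List.Mem.tail _ (List.Mem.head _))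
    have key : ∃ u v : Fin 4, Cminus4.adj u v ∧ ¬ K.adj u v := by
      rcases hK with hv | h
      · obtain ⟨x, hx⟩ := Set.ne_univ_iff_exists_notMem _ |>.mp hv
        fin_cases x
        · exact ⟨0, 1, arc01, fun h => hx (K.mem_left _ _ h)⟩
        · exact ⟨0, 1, arc01, fun h => hx (K.mem_right _ _ h)⟩
        · exact ⟨1, 2, arc12, fun h => hx (K.mem_right _ _ h)⟩
        · exact ⟨0, 3, arc03, fun h => hx (K.mem_right _ _ h)⟩
      · exact h
    obtain ⟨u, v, huv, hnK⟩ := key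
    have hmem : (u, v) ∈ [((0:Fin 4),(1:Fin 4)),(1,2),(0,3),(2,3)] := huv
    simp only [List.mem_cons, List.not_mem_nil, or_false, Prod.mk.injEq] at hmem
    rcases hmem with ⟨hu, hv⟩ | ⟨hu, hv⟩ | ⟨hu, hv⟩ | ⟨hu, hv⟩ <;> subst hu <;> subst hv
    · exact subgraph_colorable_aux K 0 1 ![1, 0, 1, 2] hnK (by decide)
    · exact subgraph_colorable_aux K 1 2 ![0, 1, 0, 1] hnK (by decide)
    · exact subgraph_colorable_aux K 0 3 ![0, 1, 2, 0] hnK (by decide)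
    · exact subgraph_colorable_aux K 2 3 ![0, 1, 2, 1] hnK (by decide)
end

section
/- Each of the oriented graphs E⃗1, E⃗2, E⃗3 is pushably 3-critical; each has 13 vertices and 15 arcs, and each has maximum average degree exactly 30/13. -/
set_option maxHeartbeats 1000000
set_option synthInstance.maxHeartbeats 1000000
set_option synthInstance.maxSize 5000
set_option maxRecDepth 10000

-- ===================== auxiliary development =====================

section Aux

open OGraph

instance decATC3 : ∀ p q : ZMod 3 × Bool, Decidable (ATC3.adj p q) := fun p q =>
  inferInstanceAs (Decidable ((p.2 = q.2 ∧ q.1 = p.1 + 1) ∨ (¬p.2 = q.2 ∧ p.1 = q.1 + 1)))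

lemma hom_push_push {V W : Type} {G : OGraph V} {H : OGraph W} {f : V → W} (S : Set V) (T : Set W)
    (hf : (G.push S).Hom H f) :
    (G.push {v | ¬((v ∈ S) ↔ (f v ∈ T))}).Hom (H.push T) f := by
  intro u v h
  have base : ∀ a b, G.adj a b →
      (((a ∈ S) ↔ (b ∈ S)) → H.adj (f a) (f b)) ∧ (¬((a ∈ S) ↔ (b ∈ S)) → H.adj (f b) (f a)) := by
    intro a b hab
    exact ⟨fun hi => hf a b (Or.inl ⟨hi, hab⟩), fun hni => hf b a (Or.inr ⟨fun hi => hni hi.symm, hab⟩)⟩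
  rcases h with ⟨hi, hG⟩ | ⟨hni, hG⟩
  · obtain ⟨p1, p2⟩ := base u v hG
    simp only [Set.mem_setOf_eq] at hi
    show (((f u ∈ T) ↔ (f v ∈ T)) ∧ H.adj (f u) (f v)) ∨
      (¬((f u ∈ T) ↔ (f v ∈ T)) ∧ H.adj (f v) (f u))
    tauto
  · obtain ⟨q1, q2⟩ := base v u hG
    simp only [Set.mem_setOf_eq] at hni
    show (((f u ∈ T) ↔ (f v ∈ T)) ∧ H.adj (f u) (f v)) ∨
      (¬((f u ∈ T) ↔ (f v ∈ T)) ∧ H.adj (f v) (f u))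
    tauto

def TGOk (t : Fin 3 → Bool) (g : Fin 3 → ZMod 3) (u v : Fin 3) : Prop :=
  (t u = t v → g v = g u + 1) ∧ (¬ t u = t v → g u = g v + 1)

instance (t g u v) : Decidable (TGOk t g u v) := by unfold TGOk; infer_instance

lemma key3 (P01 P02 P12 : Prop) :
    ∃ (t : Fin 3 → Bool) (g : Fin 3 → ZMod 3),
      ((P01 → TGOk t g 0 1) ∧ (¬P01 → TGOk t g 1 0)) ∧
      ((P02 → TGOk t g 0 2) ∧ (¬P02 → TGOk t g 2 0)) ∧
      ((P12 → TGOk t g 1 2) ∧ (¬P12 → TGOk t g 2 1)) := by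
  by_cases h01 : P01 <;> by_cases h02 : P02 <;> by_cases h12 : P12
  · exact ⟨![false,true,false], ![(0 : ZMod 3),(2 : ZMod 3),(1 : ZMod 3)], ⟨fun _ => by decide, fun hn => absurd h01 hn⟩, ⟨fun _ => by decide, fun hn => absurd h02 hn⟩, ⟨fun _ => by decide, fun hn => absurd h12 hn⟩⟩
  · exact ⟨![false,false,true], ![(0 : ZMod 3),(1 : ZMod 3),(2 : ZMod 3)], ⟨fun _ => by decide, fun hn => absurd h01 hn⟩, ⟨fun _ => by decide, fun hn => absurd h02 hn⟩, ⟨fun hp => absurd hp h12, fun _ => by decide⟩⟩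
  · exact ⟨![false,false,false], ![(0 : ZMod 3),(1 : ZMod 3),(2 : ZMod 3)], ⟨fun _ => by decide, fun hn => absurd h01 hn⟩, ⟨fun hp => absurd hp h02, fun _ => by decide⟩, ⟨fun _ => by decide, fun hn => absurd h12 hn⟩⟩
  · exact ⟨![false,true,true], ![(0 : ZMod 3),(2 : ZMod 3),(1 : ZMod 3)], ⟨fun _ => by decide, fun hn => absurd h01 hn⟩, ⟨fun hp => absurd hp h02, fun _ => by decide⟩, ⟨fun hp => absurd hp h12, fun _ => by decide⟩⟩
  · exact ⟨![false,true,true], ![(0 : ZMod 3),(1 : ZMod 3),(2 : ZMod 3)], ⟨fun hp => absurd hp h01, fun _ => by decide⟩, ⟨fun _ => by decide, fun hn => absurd h02 hn⟩, ⟨fun _ => by decide, fun hn => absurd h12 hn⟩⟩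
  · exact ⟨![false,false,false], ![(0 : ZMod 3),(2 : ZMod 3),(1 : ZMod 3)], ⟨fun hp => absurd hp h01, fun _ => by decide⟩, ⟨fun _ => by decide, fun hn => absurd h02 hn⟩, ⟨fun hp => absurd hp h12, fun _ => by decide⟩⟩
  · exact ⟨![false,false,true], ![(0 : ZMod 3),(2 : ZMod 3),(1 : ZMod 3)], ⟨fun hp => absurd hp h01, fun _ => by decide⟩, ⟨fun hp => absurd hp h02, fun _ => by decide⟩, ⟨fun _ => by decide, fun hn => absurd h12 hn⟩⟩
  · exact ⟨![false,true,false], ![(0 : ZMod 3),(1 : ZMod 3),(2 : ZMod 3)], ⟨fun hp => absurd hp h01, fun _ => by decide⟩, ⟨fun hp => absurd hp h02, fun _ => by decide⟩, ⟨fun hp => absurd hp h12, fun _ => by decide⟩⟩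

lemma three_pushes (H : OGraph (Fin 3)) :
    ∃ (T : Set (Fin 3)) (g : Fin 3 → ZMod 3), (H.push T).Hom C3vec g := by
  obtain ⟨t, g, ⟨k1t, k1f⟩, ⟨k2t, k2f⟩, ⟨k3t, k3f⟩⟩ := key3 (H.adj 0 1) (H.adj 0 2) (H.adj 1 2)
  have hOk : ∀ u v, H.adj u v → TGOk t g u v := by
    intro u v h
    fin_cases u <;> fin_cases v
    · exact absurd h (H.irrefl' _)
    · exact k1t h
    · exact k2t h
    · exact k1f (H.asymm' _ _ h)
    · exact absurd h (H.irrefl' _)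
    · exact k3t h
    · exact k2f (H.asymm' _ _ h)
    · exact k3f (H.asymm' _ _ h)
    · exact absurd h (H.irrefl' _)
  refine ⟨{x | t x = true}, g, ?_⟩
  rintro u v (⟨hi, h⟩ | ⟨hni, h⟩)
  · have ht : t u = t v := by
      simp only [Set.mem_setOf_eq] at hi
      cases hu : t u <;> cases hv : t v <;> simp_all
    exact (hOk u v h).1 ht
  · have ht : ¬ t v = t u := by
      simp only [Set.mem_setOf_eq] at hni
      intro he
      exact hni (by rw [he])
    exact (hOk v u h).2 ht

lemma toAT {V : Type} {G : OGraph V} (h : G.PushablyColorable 3) :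
    ∃ F : V → ZMod 3 × Bool, G.Hom ATC3 F := by
  classical
  obtain ⟨H, S, f, hf⟩ := h
  obtain ⟨T, g, hg⟩ := three_pushes H
  have h2 := hom_push_push S T hf
  have h3 : (G.push {v | ¬((v ∈ S) ↔ (f v ∈ T))}).Hom C3vec (fun v => g (f v)) :=
    fun u v hh => hg _ _ (h2 u v hh)
  refine ⟨fun v => (g (f v), decide (v ∈ {v | ¬((v ∈ S) ↔ (f v ∈ T))})), ?_⟩
  intro u v huv
  by_cases hs : (u ∈ {v | ¬((v ∈ S) ↔ (f v ∈ T))}) ↔ (v ∈ {v | ¬((v ∈ S) ↔ (f v ∈ T))})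
  · exact Or.inl ⟨decide_eq_decide.mpr hs, h3 u v (Or.inl ⟨hs, huv⟩)⟩
  · exact Or.inr ⟨fun he => hs (decide_eq_decide.mp he), h3 v u (Or.inr ⟨fun hi => hs hi.symm, huv⟩)⟩

def Cyc3 : OGraph (Fin 3) := OGraph.ofList 3 [(0,1),(1,2),(2,0)] (by decide) (by decide)

instance decCyc3 : ∀ u v : Fin 3, Decidable (Cyc3.adj u v) := fun u v =>
  inferInstanceAs (Decidable ((u, v) ∈ [((0 : Fin 3), (1 : Fin 3)), (1, 2), (2, 0)]))

def goodE (l : List (Fin 13 × Fin 13)) (e : Fin 13 × Fin 13)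
    (s : Fin 13 → Bool) (f : Fin 13 → Fin 3) : Prop :=
  ∀ p ∈ l, p ≠ e →
    ((s p.1 = s p.2 → Cyc3.adj (f p.1) (f p.2)) ∧ (¬ s p.1 = s p.2 → Cyc3.adj (f p.2) (f p.1)))

instance (l e s f) : Decidable (goodE l e s f) := by unfold goodE; infer_instance

lemma colorable_of_missing {G : OGraph (Fin 13)} {l : List (Fin 13 × Fin 13)}
    (hGl : ∀ u v, G.adj u v → (u, v) ∈ l)
    (e : Fin 13 × Fin 13) (s : Fin 13 → Bool) (f : Fin 13 → Fin 3)
    (hg : goodE l e s f) (K : G.Subgraph) (hK : ¬ K.adj e.1 e.2) :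
    K.toOGraph.PushablyColorable 3 := by
  refine ⟨Cyc3, {v : K.verts | s v.1 = true}, fun v => f v.1, ?_⟩
  rintro u v (⟨hi, h⟩ | ⟨hni, h⟩)
  · have hl := hGl _ _ (K.adj_sub _ _ h)
    have hne : (u.1, v.1) ≠ e := by
      intro he; exact hK (by rw [← he]; exact h)
    have hs : s u.1 = s v.1 := by
      simp only [Set.mem_setOf_eq] at hi
      cases hsu : s u.1 <;> cases hsv : s v.1 <;> simp_all
    exact (hg _ hl hne).1 hs
  · have hl := hGl _ _ (K.adj_sub _ _ h)
    have hne : (v.1, u.1) ≠ e := by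
      intro he; exact hK (by rw [← he]; exact h)
    have hs : ¬ s v.1 = s u.1 := by
      simp only [Set.mem_setOf_eq] at hni
      intro he; exact hni (by rw [he])
    exact (hg _ hl hne).2 hs

def cif (b : Bool) : ℕ := if b = true then 1 else 0

def vlist : List (Fin 13) := [0,1,2,3,4,5,6,7,8,9,10,11,12]

def ln1 : List (Fin 13 × Fin 13) := [(2,3),(3,0),(3,1),(0,4),(4,5),(5,6),(6,2),(1,7),(7,8),(8,9),(9,2),(0,10),(10,11),(11,12),(1,12)]
def ln2 : List (Fin 13 × Fin 13) := [(0,4),(4,2),(2,5),(5,1),(1,6),(6,0),(0,7),(7,8),(8,3),(1,9),(9,10),(10,3),(2,11),(11,12),(12,3)]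
def ln3 : List (Fin 13 × Fin 13) := [(2,4),(4,0),(2,5),(5,1),(6,0),(6,7),(7,8),(8,1),(0,9),(9,10),(10,3),(1,11),(11,12),(12,3),(3,2)]

lemma arith1 : ∀ b0 b1 b2 b3 b4 b5 b6 b7 b8 b9 b10 b11 b12 : Bool,
    13 * (cif (b2 && b3) + cif (b3 && b0) + cif (b3 && b1) + cif (b0 && b4) + cif (b4 && b5) + cif (b5 && b6) + cif (b6 && b2) + cif (b1 && b7) + cif (b7 && b8) + cif (b8 && b9) + cif (b9 && b2) + cif (b0 && b10) + cif (b10 && b11) + cif (b11 && b12) + cif (b1 && b12)) ≤ 15 * (cif b0 + cif b1 + cif b2 + cif b3 + cif b4 + cif b5 + cif b6 + cif b7 + cif b8 + cif b9 + cif b10 + cif b11 + cif b12) := by decide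

lemma arith2 : ∀ b0 b1 b2 b3 b4 b5 b6 b7 b8 b9 b10 b11 b12 : Bool,
    13 * (cif (b0 && b4) + cif (b4 && b2) + cif (b2 && b5) + cif (b5 && b1) + cif (b1 && b6) + cif (b6 && b0) + cif (b0 && b7) + cif (b7 && b8) + cif (b8 && b3) + cif (b1 && b9) + cif (b9 && b10) + cif (b10 && b3) + cif (b2 && b11) + cif (b11 && b12) + cif (b12 && b3)) ≤ 15 * (cif b0 + cif b1 + cif b2 + cif b3 + cif b4 + cif b5 + cif b6 + cif b7 + cif b8 + cif b9 + cif b10 + cif b11 + cif b12) := by decide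

lemma arith3 : ∀ b0 b1 b2 b3 b4 b5 b6 b7 b8 b9 b10 b11 b12 : Bool,
    13 * (cif (b2 && b4) + cif (b4 && b0) + cif (b2 && b5) + cif (b5 && b1) + cif (b6 && b0) + cif (b6 && b7) + cif (b7 && b8) + cif (b8 && b1) + cif (b0 && b9) + cif (b9 && b10) + cif (b10 && b3) + cif (b1 && b11) + cif (b11 && b12) + cif (b12 && b3) + cif (b3 && b2)) ≤ 15 * (cif b0 + cif b1 + cif b2 + cif b3 + cif b4 + cif b5 + cif b6 + cif b7 + cif b8 + cif b9 + cif b10 + cif b11 + cif b12) := by decide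

lemma hb1 : ∀ s : Fin 13 → Bool,
    13 * (ln1.countP fun p => s p.1 && s p.2) ≤ 15 * (vlist.countP s) := by
  intro s
  have h := arith1 (s 0) (s 1) (s 2) (s 3) (s 4) (s 5) (s 6) (s 7) (s 8) (s 9) (s 10) (s 11) (s 12)
  simp only [cif] at h
  simp only [ln1, vlist, List.countP_cons, List.countP_nil]
  linarith

lemma hb2 : ∀ s : Fin 13 → Bool,
    13 * (ln2.countP fun p => s p.1 && s p.2) ≤ 15 * (vlist.countP s) := by
  intro s
  have h := arith2 (s 0) (s 1) (s 2) (s 3) (s 4) (s 5) (s 6) (s 7) (s 8) (s 9) (s 10) (s 11) (s 12)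
  simp only [cif] at h
  simp only [ln2, vlist, List.countP_cons, List.countP_nil]
  linarith

lemma hb3 : ∀ s : Fin 13 → Bool,
    13 * (ln3.countP fun p => s p.1 && s p.2) ≤ 15 * (vlist.countP s) := by
  intro s
  have h := arith3 (s 0) (s 1) (s 2) (s 3) (s 4) (s 5) (s 6) (s 7) (s 8) (s 9) (s 10) (s 11) (s 12)
  simp only [cif] at h
  simp only [ln3, vlist, List.countP_cons, List.countP_nil]
  linarith

lemma madEq_of {G : OGraph (Fin 13)} {l : List (Fin 13 × Fin 13)}
    (hGl : ∀ u v, G.adj u v → (u, v) ∈ l)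
    (hAC : G.arcCount = 15)
    (hb : ∀ s : Fin 13 → Bool,
      13 * (l.countP fun p => s p.1 && s p.2) ≤ 15 * (vlist.countP s)) :
    G.MadEq (30/13) := by
  classical
  constructor
  · intro K hne
    set s : Fin 13 → Bool := fun v => decide (v ∈ K.verts) with hsdef
    have hmle : K.arcCount ≤ l.countP (fun p => s p.1 && s p.2) := by
      have hsub : {p : Fin 13 × Fin 13 | K.adj p.1 p.2} ⊆
          ↑((l.filter (fun p => s p.1 && s p.2)).toFinset) := by
        intro p hp
        simp only [Finset.mem_coe, List.mem_toFinset, List.mem_filter]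
        refine ⟨?_, ?_⟩
        · have h1 := hGl p.1 p.2 (K.adj_sub _ _ hp)
          rwa [Prod.mk.eta] at h1
        · simp only [hsdef, Bool.and_eq_true, decide_eq_true_eq]
          exact ⟨K.mem_left _ _ hp, K.mem_right _ _ hp⟩
      calc K.arcCount = {p : Fin 13 × Fin 13 | K.adj p.1 p.2}.ncard :=
              Nat.card_coe_set_eq _
        _ ≤ (↑((l.filter (fun p => s p.1 && s p.2)).toFinset) : Set (Fin 13 × Fin 13)).ncard :=
              Set.ncard_le_ncard hsub (Set.toFinite _)
        _ = (l.filter (fun p => s p.1 && s p.2)).toFinset.card := Set.ncard_coe_finset _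
        _ ≤ (l.filter (fun p => s p.1 && s p.2)).length := List.toFinset_card_le _
        _ = l.countP (fun p => s p.1 && s p.2) := List.countP_eq_length_filter.symm
    have hnge : vlist.countP s ≤ Nat.card K.verts := by
      have hnd : (vlist.filter s).Nodup := (show vlist.Nodup by decide).filter _
      have hsub : ↑((vlist.filter s).toFinset) ⊆ K.verts := by
        intro x hx
        simp only [Finset.mem_coe, List.mem_toFinset, List.mem_filter] at hx
        have := hx.2
        simp only [hsdef, decide_eq_true_eq] at this
        exact this
      calc vlist.countP s = (vlist.filter s).length := List.countP_eq_length_filter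
        _ = (vlist.filter s).toFinset.card := (List.toFinset_card_of_nodup hnd).symm
        _ = (↑((vlist.filter s).toFinset) : Set (Fin 13)).ncard := (Set.ncard_coe_finset _).symm
        _ ≤ K.verts.ncard := Set.ncard_le_ncard hsub (Set.toFinite _)
        _ = Nat.card K.verts := (Nat.card_coe_set_eq _).symm
    have hmain : 13 * K.arcCount ≤ 15 * Nat.card K.verts :=
      le_trans (Nat.mul_le_mul_left 13 hmle)
        (le_trans (hb s) (Nat.mul_le_mul_left 15 hnge))
    haveI : Nonempty K.verts := hne.to_subtype
    have hpos : 0 < Nat.card K.verts := Nat.card_pos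
    rw [OGraph.Subgraph.density, div_le_div_iff₀ (by exact_mod_cast hpos) (by norm_num)]
    have hq := (Nat.cast_le (α := ℚ)).mpr hmain
    push_cast at hq ⊢
    linarith
  · refine ⟨⟨Set.univ, G.adj, fun _ _ h => h, fun _ _ _ => trivial, fun _ _ _ => trivial⟩,
      ⟨0, trivial⟩, ?_⟩
    have h1 : (⟨Set.univ, G.adj, fun _ _ h => h, fun _ _ _ => trivial, fun _ _ _ => trivial⟩ :
        G.Subgraph).arcCount = 15 := hAC
    have h2 : Nat.card (⟨Set.univ, G.adj, fun _ _ h => h, fun _ _ _ => trivial,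
        fun _ _ _ => trivial⟩ : G.Subgraph).verts = 13 := by
      show Nat.card (Set.univ : Set (Fin 13)) = 13
      rw [Nat.card_coe_set_eq, Set.ncard_univ, Nat.card_eq_fintype_card, Fintype.card_fin]
    rw [OGraph.Subgraph.density, h1, h2]
    norm_num


lemma notHom1 : ¬ ∃ c2 c3 c0 c1 : ZMod 3 × Bool,
    ATC3.adj c2 c3 ∧ ATC3.adj c3 c0 ∧ ATC3.adj c3 c1 ∧
    (∃ x y z, ATC3.adj c0 x ∧ ATC3.adj x y ∧ ATC3.adj y z ∧ ATC3.adj z c2) ∧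
    (∃ x y z, ATC3.adj c1 x ∧ ATC3.adj x y ∧ ATC3.adj y z ∧ ATC3.adj z c2) ∧
    (∃ x y z, ATC3.adj c0 x ∧ ATC3.adj x y ∧ ATC3.adj y z ∧ ATC3.adj c1 z) := by decide

lemma notHom2 : ¬ ∃ c0 c1 c2 c3 : ZMod 3 × Bool,
    (∃ x, ATC3.adj c0 x ∧ ATC3.adj x c2) ∧
    (∃ x, ATC3.adj c2 x ∧ ATC3.adj x c1) ∧
    (∃ x, ATC3.adj c1 x ∧ ATC3.adj x c0) ∧
    (∃ x y, ATC3.adj c0 x ∧ ATC3.adj x y ∧ ATC3.adj y c3) ∧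
    (∃ x y, ATC3.adj c1 x ∧ ATC3.adj x y ∧ ATC3.adj y c3) ∧
    (∃ x y, ATC3.adj c2 x ∧ ATC3.adj x y ∧ ATC3.adj y c3) := by decide

lemma notHom3 : ¬ ∃ c3 c2 c0 c1 : ZMod 3 × Bool,
    ATC3.adj c3 c2 ∧
    (∃ x, ATC3.adj c2 x ∧ ATC3.adj x c0) ∧
    (∃ x, ATC3.adj c2 x ∧ ATC3.adj x c1) ∧
    (∃ x y z, ATC3.adj x c0 ∧ ATC3.adj x y ∧ ATC3.adj y z ∧ ATC3.adj z c1) ∧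
    (∃ x y, ATC3.adj c0 x ∧ ATC3.adj x y ∧ ATC3.adj y c3) ∧
    (∃ x y, ATC3.adj c1 x ∧ ATC3.adj x y ∧ ATC3.adj y c3) := by decide


lemma not3col1 : ¬ E1.PushablyColorable 3 := by
  intro h
  obtain ⟨F, hF⟩ := toAT h
  have hA : ∀ u v : Fin 13, (u, v) ∈ ln1 → ATC3.adj (F u) (F v) := fun u v h' => hF u v h'
  exact notHom1 ⟨F 2, F 3, F 0, F 1, hA 2 3 (by decide), hA 3 0 (by decide), hA 3 1 (by decide),
    ⟨F 4, F 5, F 6, hA 0 4 (by decide), hA 4 5 (by decide), hA 5 6 (by decide), hA 6 2 (by decide)⟩,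
    ⟨F 7, F 8, F 9, hA 1 7 (by decide), hA 7 8 (by decide), hA 8 9 (by decide), hA 9 2 (by decide)⟩,
    ⟨F 10, F 11, F 12, hA 0 10 (by decide), hA 10 11 (by decide), hA 11 12 (by decide),
      hA 1 12 (by decide)⟩⟩

lemma not3col2 : ¬ E2.PushablyColorable 3 := by
  intro h
  obtain ⟨F, hF⟩ := toAT h
  have hA : ∀ u v : Fin 13, (u, v) ∈ ln2 → ATC3.adj (F u) (F v) := fun u v h' => hF u v h'
  exact notHom2 ⟨F 0, F 1, F 2, F 3,
    ⟨F 4, hA 0 4 (by decide), hA 4 2 (by decide)⟩,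
    ⟨F 5, hA 2 5 (by decide), hA 5 1 (by decide)⟩,
    ⟨F 6, hA 1 6 (by decide), hA 6 0 (by decide)⟩,
    ⟨F 7, F 8, hA 0 7 (by decide), hA 7 8 (by decide), hA 8 3 (by decide)⟩,
    ⟨F 9, F 10, hA 1 9 (by decide), hA 9 10 (by decide), hA 10 3 (by decide)⟩,
    ⟨F 11, F 12, hA 2 11 (by decide), hA 11 12 (by decide), hA 12 3 (by decide)⟩⟩

lemma not3col3 : ¬ E3.PushablyColorable 3 := by
  intro h
  obtain ⟨F, hF⟩ := toAT h
  have hA : ∀ u v : Fin 13, (u, v) ∈ ln3 → ATC3.adj (F u) (F v) := fun u v h' => hF u v h'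
  exact notHom3 ⟨F 3, F 2, F 0, F 1, hA 3 2 (by decide),
    ⟨F 4, hA 2 4 (by decide), hA 4 0 (by decide)⟩,
    ⟨F 5, hA 2 5 (by decide), hA 5 1 (by decide)⟩,
    ⟨F 6, F 7, F 8, hA 6 0 (by decide), hA 6 7 (by decide), hA 7 8 (by decide), hA 8 1 (by decide)⟩,
    ⟨F 9, F 10, hA 0 9 (by decide), hA 9 10 (by decide), hA 10 3 (by decide)⟩,
    ⟨F 11, F 12, hA 1 11 (by decide), hA 11 12 (by decide), hA 12 3 (by decide)⟩⟩

lemma sub1 (K : E1.Subgraph) (hK : K.Proper) : K.toOGraph.PushablyColorable 3 := by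
  have hGl : ∀ u v : Fin 13, E1.adj u v → (u, v) ∈ ln1 := fun _ _ h => h
  rcases hK with hv | ⟨u, v, huv, hnK⟩
  · obtain ⟨x, hx⟩ := (Set.ne_univ_iff_exists_notMem _).mp hv
    fin_cases x
    · exact colorable_of_missing hGl ((3,0) : Fin 13 × Fin 13) ![false,false,false,true,false,false,true,true,false,true,false,true,false] ![(0 : Fin 3),(1 : Fin 3),(0 : Fin 3),(2 : Fin 3),(1 : Fin 3),(2 : Fin 3),(1 : Fin 3),(0 : Fin 3),(2 : Fin 3),(1 : Fin 3),(1 : Fin 3),(0 : Fin 3),(2 : Fin 3)] (by decide) K (fun h => hx (K.mem_right _ _ h))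
    · exact colorable_of_missing hGl ((3,1) : Fin 13 × Fin 13) ![false,false,false,false,false,false,false,false,false,true,false,true,false] ![(0 : Fin 3),(1 : Fin 3),(1 : Fin 3),(2 : Fin 3),(1 : Fin 3),(2 : Fin 3),(0 : Fin 3),(2 : Fin 3),(0 : Fin 3),(2 : Fin 3),(1 : Fin 3),(0 : Fin 3),(2 : Fin 3)] (by decide) K (fun h => hx (K.mem_right _ _ h))
    · exact colorable_of_missing hGl ((2,3) : Fin 13 × Fin 13) ![false,true,false,false,false,false,true,false,false,false,false,false,false] ![(0 : Fin 3),(1 : Fin 3),(0 : Fin 3),(2 : Fin 3),(1 : Fin 3),(2 : Fin 3),(1 : Fin 3),(0 : Fin 3),(1 : Fin 3),(2 : Fin 3),(1 : Fin 3),(2 : Fin 3),(0 : Fin 3)] (by decide) K (fun h => hx (K.mem_left _ _ h))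
    · exact colorable_of_missing hGl ((2,3) : Fin 13 × Fin 13) ![false,true,false,false,false,false,true,false,false,false,false,false,false] ![(0 : Fin 3),(1 : Fin 3),(0 : Fin 3),(2 : Fin 3),(1 : Fin 3),(2 : Fin 3),(1 : Fin 3),(0 : Fin 3),(1 : Fin 3),(2 : Fin 3),(1 : Fin 3),(2 : Fin 3),(0 : Fin 3)] (by decide) K (fun h => hx (K.mem_right _ _ h))
    · exact colorable_of_missing hGl ((0,4) : Fin 13 × Fin 13) ![false,true,true,false,false,true,false,false,true,false,false,false,false] ![(0 : Fin 3),(1 : Fin 3),(0 : Fin 3),(2 : Fin 3),(0 : Fin 3),(2 : Fin 3),(1 : Fin 3),(0 : Fin 3),(2 : Fin 3),(1 : Fin 3),(1 : Fin 3),(2 : Fin 3),(0 : Fin 3)] (by decide) K (fun h => hx (K.mem_right _ _ h))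
    · exact colorable_of_missing hGl ((4,5) : Fin 13 × Fin 13) ![false,true,true,false,false,false,false,false,true,false,false,false,false] ![(0 : Fin 3),(1 : Fin 3),(0 : Fin 3),(2 : Fin 3),(1 : Fin 3),(0 : Fin 3),(1 : Fin 3),(0 : Fin 3),(2 : Fin 3),(1 : Fin 3),(1 : Fin 3),(2 : Fin 3),(0 : Fin 3)] (by decide) K (fun h => hx (K.mem_right _ _ h))
    · exact colorable_of_missing hGl ((5,6) : Fin 13 × Fin 13) ![false,true,true,false,false,false,false,false,true,false,false,false,false] ![(0 : Fin 3),(1 : Fin 3),(0 : Fin 3),(2 : Fin 3),(1 : Fin 3),(2 : Fin 3),(1 : Fin 3),(0 : Fin 3),(2 : Fin 3),(1 : Fin 3),(1 : Fin 3),(2 : Fin 3),(0 : Fin 3)] (by decide) K (fun h => hx (K.mem_right _ _ h))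
    · exact colorable_of_missing hGl ((1,7) : Fin 13 × Fin 13) ![false,true,false,false,false,false,false,false,false,false,false,false,false] ![(0 : Fin 3),(1 : Fin 3),(1 : Fin 3),(2 : Fin 3),(1 : Fin 3),(2 : Fin 3),(0 : Fin 3),(1 : Fin 3),(2 : Fin 3),(0 : Fin 3),(1 : Fin 3),(2 : Fin 3),(0 : Fin 3)] (by decide) K (fun h => hx (K.mem_right _ _ h))
    · exact colorable_of_missing hGl ((7,8) : Fin 13 × Fin 13) ![false,true,false,false,false,false,false,false,false,true,false,false,false] ![(0 : Fin 3),(1 : Fin 3),(1 : Fin 3),(2 : Fin 3),(1 : Fin 3),(2 : Fin 3),(0 : Fin 3),(0 : Fin 3),(0 : Fin 3),(2 : Fin 3),(1 : Fin 3),(2 : Fin 3),(0 : Fin 3)] (by decide) K (fun h => hx (K.mem_right _ _ h))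
    · exact colorable_of_missing hGl ((8,9) : Fin 13 × Fin 13) ![false,true,false,false,false,false,false,false,false,false,false,false,false] ![(0 : Fin 3),(1 : Fin 3),(1 : Fin 3),(2 : Fin 3),(1 : Fin 3),(2 : Fin 3),(0 : Fin 3),(0 : Fin 3),(1 : Fin 3),(0 : Fin 3),(1 : Fin 3),(2 : Fin 3),(0 : Fin 3)] (by decide) K (fun h => hx (K.mem_right _ _ h))
    · exact colorable_of_missing hGl ((0,10) : Fin 13 × Fin 13) ![false,false,false,false,false,false,false,false,false,false,false,true,false] ![(0 : Fin 3),(0 : Fin 3),(1 : Fin 3),(2 : Fin 3),(1 : Fin 3),(2 : Fin 3),(0 : Fin 3),(1 : Fin 3),(2 : Fin 3),(0 : Fin 3),(0 : Fin 3),(2 : Fin 3),(1 : Fin 3)] (by decide) K (fun h => hx (K.mem_right _ _ h))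
    · exact colorable_of_missing hGl ((10,11) : Fin 13 × Fin 13) ![false,false,false,false,false,false,false,false,false,false,false,false,false] ![(0 : Fin 3),(0 : Fin 3),(1 : Fin 3),(2 : Fin 3),(1 : Fin 3),(2 : Fin 3),(0 : Fin 3),(1 : Fin 3),(2 : Fin 3),(0 : Fin 3),(1 : Fin 3),(0 : Fin 3),(1 : Fin 3)] (by decide) K (fun h => hx (K.mem_right _ _ h))
    · exact colorable_of_missing hGl ((11,12) : Fin 13 × Fin 13) ![false,false,false,false,false,false,false,false,false,false,false,false,false] ![(0 : Fin 3),(0 : Fin 3),(1 : Fin 3),(2 : Fin 3),(1 : Fin 3),(2 : Fin 3),(0 : Fin 3),(1 : Fin 3),(2 : Fin 3),(0 : Fin 3),(1 : Fin 3),(2 : Fin 3),(1 : Fin 3)] (by decide) K (fun h => hx (K.mem_right _ _ h))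
  · have hmem : (u, v) ∈ ln1 := huv
    simp only [ln1, List.mem_cons, List.not_mem_nil, or_false, Prod.mk.injEq] at hmem
    rcases hmem with ⟨rfl, rfl⟩|⟨rfl, rfl⟩|⟨rfl, rfl⟩|⟨rfl, rfl⟩|⟨rfl, rfl⟩|⟨rfl, rfl⟩|⟨rfl, rfl⟩|⟨rfl, rfl⟩|⟨rfl, rfl⟩|⟨rfl, rfl⟩|⟨rfl, rfl⟩|⟨rfl, rfl⟩|⟨rfl, rfl⟩|⟨rfl, rfl⟩|⟨rfl, rfl⟩
    · exact colorable_of_missing hGl ((2,3) : Fin 13 × Fin 13) ![false,true,false,false,false,false,true,false,false,false,false,false,false] ![(0 : Fin 3),(1 : Fin 3),(0 : Fin 3),(2 : Fin 3),(1 : Fin 3),(2 : Fin 3),(1 : Fin 3),(0 : Fin 3),(1 : Fin 3),(2 : Fin 3),(1 : Fin 3),(2 : Fin 3),(0 : Fin 3)] (by decide) K hnK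
    · exact colorable_of_missing hGl ((3,0) : Fin 13 × Fin 13) ![false,false,false,true,false,false,true,true,false,true,false,true,false] ![(0 : Fin 3),(1 : Fin 3),(0 : Fin 3),(2 : Fin 3),(1 : Fin 3),(2 : Fin 3),(1 : Fin 3),(0 : Fin 3),(2 : Fin 3),(1 : Fin 3),(1 : Fin 3),(0 : Fin 3),(2 : Fin 3)] (by decide) K hnK
    · exact colorable_of_missing hGl ((3,1) : Fin 13 × Fin 13) ![false,false,false,false,false,false,false,false,false,true,false,true,false] ![(0 : Fin 3),(1 : Fin 3),(1 : Fin 3),(2 : Fin 3),(1 : Fin 3),(2 : Fin 3),(0 : Fin 3),(2 : Fin 3),(0 : Fin 3),(2 : Fin 3),(1 : Fin 3),(0 : Fin 3),(2 : Fin 3)] (by decide) K hnK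
    · exact colorable_of_missing hGl ((0,4) : Fin 13 × Fin 13) ![false,true,true,false,false,true,false,false,true,false,false,false,false] ![(0 : Fin 3),(1 : Fin 3),(0 : Fin 3),(2 : Fin 3),(0 : Fin 3),(2 : Fin 3),(1 : Fin 3),(0 : Fin 3),(2 : Fin 3),(1 : Fin 3),(1 : Fin 3),(2 : Fin 3),(0 : Fin 3)] (by decide) K hnK
    · exact colorable_of_missing hGl ((4,5) : Fin 13 × Fin 13) ![false,true,true,false,false,false,false,false,true,false,false,false,false] ![(0 : Fin 3),(1 : Fin 3),(0 : Fin 3),(2 : Fin 3),(1 : Fin 3),(0 : Fin 3),(1 : Fin 3),(0 : Fin 3),(2 : Fin 3),(1 : Fin 3),(1 : Fin 3),(2 : Fin 3),(0 : Fin 3)] (by decide) K hnK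
    · exact colorable_of_missing hGl ((5,6) : Fin 13 × Fin 13) ![false,true,true,false,false,false,false,false,true,false,false,false,false] ![(0 : Fin 3),(1 : Fin 3),(0 : Fin 3),(2 : Fin 3),(1 : Fin 3),(2 : Fin 3),(1 : Fin 3),(0 : Fin 3),(2 : Fin 3),(1 : Fin 3),(1 : Fin 3),(2 : Fin 3),(0 : Fin 3)] (by decide) K hnK
    · exact colorable_of_missing hGl ((6,2) : Fin 13 × Fin 13) ![false,true,true,false,false,false,false,false,true,false,false,false,false] ![(0 : Fin 3),(1 : Fin 3),(0 : Fin 3),(2 : Fin 3),(1 : Fin 3),(2 : Fin 3),(0 : Fin 3),(0 : Fin 3),(2 : Fin 3),(1 : Fin 3),(1 : Fin 3),(2 : Fin 3),(0 : Fin 3)] (by decide) K hnK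
    · exact colorable_of_missing hGl ((1,7) : Fin 13 × Fin 13) ![false,true,false,false,false,false,false,false,false,false,false,false,false] ![(0 : Fin 3),(1 : Fin 3),(1 : Fin 3),(2 : Fin 3),(1 : Fin 3),(2 : Fin 3),(0 : Fin 3),(1 : Fin 3),(2 : Fin 3),(0 : Fin 3),(1 : Fin 3),(2 : Fin 3),(0 : Fin 3)] (by decide) K hnK
    · exact colorable_of_missing hGl ((7,8) : Fin 13 × Fin 13) ![false,true,false,false,false,false,false,false,false,true,false,false,false] ![(0 : Fin 3),(1 : Fin 3),(1 : Fin 3),(2 : Fin 3),(1 : Fin 3),(2 : Fin 3),(0 : Fin 3),(0 : Fin 3),(0 : Fin 3),(2 : Fin 3),(1 : Fin 3),(2 : Fin 3),(0 : Fin 3)] (by decide) K hnK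
    · exact colorable_of_missing hGl ((8,9) : Fin 13 × Fin 13) ![false,true,false,false,false,false,false,false,false,false,false,false,false] ![(0 : Fin 3),(1 : Fin 3),(1 : Fin 3),(2 : Fin 3),(1 : Fin 3),(2 : Fin 3),(0 : Fin 3),(0 : Fin 3),(1 : Fin 3),(0 : Fin 3),(1 : Fin 3),(2 : Fin 3),(0 : Fin 3)] (by decide) K hnK
    · exact colorable_of_missing hGl ((9,2) : Fin 13 × Fin 13) ![false,true,false,false,false,false,false,false,false,false,false,false,false] ![(0 : Fin 3),(1 : Fin 3),(1 : Fin 3),(2 : Fin 3),(1 : Fin 3),(2 : Fin 3),(0 : Fin 3),(0 : Fin 3),(1 : Fin 3),(2 : Fin 3),(1 : Fin 3),(2 : Fin 3),(0 : Fin 3)] (by decide) K hnK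
    · exact colorable_of_missing hGl ((0,10) : Fin 13 × Fin 13) ![false,false,false,false,false,false,false,false,false,false,false,true,false] ![(0 : Fin 3),(0 : Fin 3),(1 : Fin 3),(2 : Fin 3),(1 : Fin 3),(2 : Fin 3),(0 : Fin 3),(1 : Fin 3),(2 : Fin 3),(0 : Fin 3),(0 : Fin 3),(2 : Fin 3),(1 : Fin 3)] (by decide) K hnK
    · exact colorable_of_missing hGl ((10,11) : Fin 13 × Fin 13) ![false,false,false,false,false,false,false,false,false,false,false,false,false] ![(0 : Fin 3),(0 : Fin 3),(1 : Fin 3),(2 : Fin 3),(1 : Fin 3),(2 : Fin 3),(0 : Fin 3),(1 : Fin 3),(2 : Fin 3),(0 : Fin 3),(1 : Fin 3),(0 : Fin 3),(1 : Fin 3)] (by decide) K hnK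
    · exact colorable_of_missing hGl ((11,12) : Fin 13 × Fin 13) ![false,false,false,false,false,false,false,false,false,false,false,false,false] ![(0 : Fin 3),(0 : Fin 3),(1 : Fin 3),(2 : Fin 3),(1 : Fin 3),(2 : Fin 3),(0 : Fin 3),(1 : Fin 3),(2 : Fin 3),(0 : Fin 3),(1 : Fin 3),(2 : Fin 3),(1 : Fin 3)] (by decide) K hnK
    · exact colorable_of_missing hGl ((1,12) : Fin 13 × Fin 13) ![false,false,false,false,false,false,false,false,false,false,false,false,false] ![(0 : Fin 3),(0 : Fin 3),(1 : Fin 3),(2 : Fin 3),(1 : Fin 3),(2 : Fin 3),(0 : Fin 3),(1 : Fin 3),(2 : Fin 3),(0 : Fin 3),(1 : Fin 3),(2 : Fin 3),(0 : Fin 3)] (by decide) K hnK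

lemma sub2 (K : E2.Subgraph) (hK : K.Proper) : K.toOGraph.PushablyColorable 3 := by
  have hGl : ∀ u v : Fin 13, E2.adj u v → (u, v) ∈ ln2 := fun _ _ h => h
  rcases hK with hv | ⟨u, v, huv, hnK⟩
  · obtain ⟨x, hx⟩ := (Set.ne_univ_iff_exists_notMem _).mp hv
    fin_cases x
    · exact colorable_of_missing hGl ((0,4) : Fin 13 × Fin 13) ![false,false,false,false,false,true,false,false,false,false,true,false,false] ![(0 : Fin 3),(1 : Fin 3),(0 : Fin 3),(0 : Fin 3),(2 : Fin 3),(2 : Fin 3),(2 : Fin 3),(1 : Fin 3),(2 : Fin 3),(2 : Fin 3),(1 : Fin 3),(1 : Fin 3),(2 : Fin 3)] (by decide) K (fun h => hx (K.mem_left _ _ h))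
    · exact colorable_of_missing hGl ((5,1) : Fin 13 × Fin 13) ![false,false,false,false,true,false,false,false,false,false,true,false,true] ![(0 : Fin 3),(1 : Fin 3),(1 : Fin 3),(0 : Fin 3),(2 : Fin 3),(2 : Fin 3),(2 : Fin 3),(1 : Fin 3),(2 : Fin 3),(2 : Fin 3),(1 : Fin 3),(2 : Fin 3),(1 : Fin 3)] (by decide) K (fun h => hx (K.mem_right _ _ h))
    · exact colorable_of_missing hGl ((4,2) : Fin 13 × Fin 13) ![false,false,false,false,false,true,false,false,false,false,true,false,false] ![(0 : Fin 3),(1 : Fin 3),(0 : Fin 3),(0 : Fin 3),(1 : Fin 3),(2 : Fin 3),(2 : Fin 3),(1 : Fin 3),(2 : Fin 3),(2 : Fin 3),(1 : Fin 3),(1 : Fin 3),(2 : Fin 3)] (by decide) K (fun h => hx (K.mem_right _ _ h))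
    · exact colorable_of_missing hGl ((8,3) : Fin 13 × Fin 13) ![false,false,false,false,false,false,false,false,false,false,false,false,true] ![(0 : Fin 3),(1 : Fin 3),(2 : Fin 3),(1 : Fin 3),(1 : Fin 3),(0 : Fin 3),(2 : Fin 3),(1 : Fin 3),(2 : Fin 3),(2 : Fin 3),(0 : Fin 3),(0 : Fin 3),(2 : Fin 3)] (by decide) K (fun h => hx (K.mem_right _ _ h))
    · exact colorable_of_missing hGl ((0,4) : Fin 13 × Fin 13) ![false,false,false,false,false,true,false,false,false,false,true,false,false] ![(0 : Fin 3),(1 : Fin 3),(0 : Fin 3),(0 : Fin 3),(2 : Fin 3),(2 : Fin 3),(2 : Fin 3),(1 : Fin 3),(2 : Fin 3),(2 : Fin 3),(1 : Fin 3),(1 : Fin 3),(2 : Fin 3)] (by decide) K (fun h => hx (K.mem_right _ _ h))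
    · exact colorable_of_missing hGl ((2,5) : Fin 13 × Fin 13) ![false,false,false,false,true,false,false,false,false,false,true,false,true] ![(0 : Fin 3),(1 : Fin 3),(1 : Fin 3),(0 : Fin 3),(2 : Fin 3),(0 : Fin 3),(2 : Fin 3),(1 : Fin 3),(2 : Fin 3),(2 : Fin 3),(1 : Fin 3),(2 : Fin 3),(1 : Fin 3)] (by decide) K (fun h => hx (K.mem_right _ _ h))
    · exact colorable_of_missing hGl ((1,6) : Fin 13 × Fin 13) ![false,false,false,false,true,false,false,false,false,false,false,false,true] ![(0 : Fin 3),(0 : Fin 3),(1 : Fin 3),(0 : Fin 3),(2 : Fin 3),(2 : Fin 3),(2 : Fin 3),(1 : Fin 3),(2 : Fin 3),(1 : Fin 3),(2 : Fin 3),(2 : Fin 3),(1 : Fin 3)] (by decide) K (fun h => hx (K.mem_right _ _ h))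
    · exact colorable_of_missing hGl ((0,7) : Fin 13 × Fin 13) ![false,false,false,false,false,false,false,false,true,false,false,false,true] ![(0 : Fin 3),(1 : Fin 3),(2 : Fin 3),(1 : Fin 3),(1 : Fin 3),(0 : Fin 3),(2 : Fin 3),(0 : Fin 3),(2 : Fin 3),(2 : Fin 3),(0 : Fin 3),(0 : Fin 3),(2 : Fin 3)] (by decide) K (fun h => hx (K.mem_right _ _ h))
    · exact colorable_of_missing hGl ((7,8) : Fin 13 × Fin 13) ![false,false,false,false,false,false,false,false,false,false,false,false,true] ![(0 : Fin 3),(1 : Fin 3),(2 : Fin 3),(1 : Fin 3),(1 : Fin 3),(0 : Fin 3),(2 : Fin 3),(1 : Fin 3),(0 : Fin 3),(2 : Fin 3),(0 : Fin 3),(0 : Fin 3),(2 : Fin 3)] (by decide) K (fun h => hx (K.mem_right _ _ h))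
    · exact colorable_of_missing hGl ((1,9) : Fin 13 × Fin 13) ![false,false,false,false,false,false,false,false,true,false,false,false,false] ![(0 : Fin 3),(1 : Fin 3),(2 : Fin 3),(2 : Fin 3),(1 : Fin 3),(0 : Fin 3),(2 : Fin 3),(1 : Fin 3),(0 : Fin 3),(0 : Fin 3),(1 : Fin 3),(0 : Fin 3),(1 : Fin 3)] (by decide) K (fun h => hx (K.mem_right _ _ h))
    · exact colorable_of_missing hGl ((9,10) : Fin 13 × Fin 13) ![false,false,false,false,false,false,false,false,true,false,false,false,false] ![(0 : Fin 3),(1 : Fin 3),(2 : Fin 3),(2 : Fin 3),(1 : Fin 3),(0 : Fin 3),(2 : Fin 3),(1 : Fin 3),(0 : Fin 3),(2 : Fin 3),(1 : Fin 3),(0 : Fin 3),(1 : Fin 3)] (by decide) K (fun h => hx (K.mem_right _ _ h))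
    · exact colorable_of_missing hGl ((2,11) : Fin 13 × Fin 13) ![false,false,false,false,false,false,false,false,false,false,true,false,false] ![(0 : Fin 3),(1 : Fin 3),(2 : Fin 3),(0 : Fin 3),(1 : Fin 3),(0 : Fin 3),(2 : Fin 3),(1 : Fin 3),(2 : Fin 3),(2 : Fin 3),(1 : Fin 3),(1 : Fin 3),(2 : Fin 3)] (by decide) K (fun h => hx (K.mem_right _ _ h))
    · exact colorable_of_missing hGl ((11,12) : Fin 13 × Fin 13) ![false,false,false,false,false,false,false,false,false,false,true,false,false] ![(0 : Fin 3),(1 : Fin 3),(2 : Fin 3),(0 : Fin 3),(1 : Fin 3),(0 : Fin 3),(2 : Fin 3),(1 : Fin 3),(2 : Fin 3),(2 : Fin 3),(1 : Fin 3),(0 : Fin 3),(2 : Fin 3)] (by decide) K (fun h => hx (K.mem_right _ _ h))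
  · have hmem : (u, v) ∈ ln2 := huv
    simp only [ln2, List.mem_cons, List.not_mem_nil, or_false, Prod.mk.injEq] at hmem
    rcases hmem with ⟨rfl, rfl⟩|⟨rfl, rfl⟩|⟨rfl, rfl⟩|⟨rfl, rfl⟩|⟨rfl, rfl⟩|⟨rfl, rfl⟩|⟨rfl, rfl⟩|⟨rfl, rfl⟩|⟨rfl, rfl⟩|⟨rfl, rfl⟩|⟨rfl, rfl⟩|⟨rfl, rfl⟩|⟨rfl, rfl⟩|⟨rfl, rfl⟩|⟨rfl, rfl⟩
    · exact colorable_of_missing hGl ((0,4) : Fin 13 × Fin 13) ![false,false,false,false,false,true,false,false,false,false,true,false,false] ![(0 : Fin 3),(1 : Fin 3),(0 : Fin 3),(0 : Fin 3),(2 : Fin 3),(2 : Fin 3),(2 : Fin 3),(1 : Fin 3),(2 : Fin 3),(2 : Fin 3),(1 : Fin 3),(1 : Fin 3),(2 : Fin 3)] (by decide) K hnK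
    · exact colorable_of_missing hGl ((4,2) : Fin 13 × Fin 13) ![false,false,false,false,false,true,false,false,false,false,true,false,false] ![(0 : Fin 3),(1 : Fin 3),(0 : Fin 3),(0 : Fin 3),(1 : Fin 3),(2 : Fin 3),(2 : Fin 3),(1 : Fin 3),(2 : Fin 3),(2 : Fin 3),(1 : Fin 3),(1 : Fin 3),(2 : Fin 3)] (by decide) K hnK
    · exact colorable_of_missing hGl ((2,5) : Fin 13 × Fin 13) ![false,false,false,false,true,false,false,false,false,false,true,false,true] ![(0 : Fin 3),(1 : Fin 3),(1 : Fin 3),(0 : Fin 3),(2 : Fin 3),(0 : Fin 3),(2 : Fin 3),(1 : Fin 3),(2 : Fin 3),(2 : Fin 3),(1 : Fin 3),(2 : Fin 3),(1 : Fin 3)] (by decide) K hnK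
    · exact colorable_of_missing hGl ((5,1) : Fin 13 × Fin 13) ![false,false,false,false,true,false,false,false,false,false,true,false,true] ![(0 : Fin 3),(1 : Fin 3),(1 : Fin 3),(0 : Fin 3),(2 : Fin 3),(2 : Fin 3),(2 : Fin 3),(1 : Fin 3),(2 : Fin 3),(2 : Fin 3),(1 : Fin 3),(2 : Fin 3),(1 : Fin 3)] (by decide) K hnK
    · exact colorable_of_missing hGl ((1,6) : Fin 13 × Fin 13) ![false,false,false,false,true,false,false,false,false,false,false,false,true] ![(0 : Fin 3),(0 : Fin 3),(1 : Fin 3),(0 : Fin 3),(2 : Fin 3),(2 : Fin 3),(2 : Fin 3),(1 : Fin 3),(2 : Fin 3),(1 : Fin 3),(2 : Fin 3),(2 : Fin 3),(1 : Fin 3)] (by decide) K hnK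
    · exact colorable_of_missing hGl ((6,0) : Fin 13 × Fin 13) ![false,false,false,false,true,false,false,false,false,false,false,false,true] ![(0 : Fin 3),(0 : Fin 3),(1 : Fin 3),(0 : Fin 3),(2 : Fin 3),(2 : Fin 3),(1 : Fin 3),(1 : Fin 3),(2 : Fin 3),(1 : Fin 3),(2 : Fin 3),(2 : Fin 3),(1 : Fin 3)] (by decide) K hnK
    · exact colorable_of_missing hGl ((0,7) : Fin 13 × Fin 13) ![false,false,false,false,false,false,false,false,true,false,false,false,true] ![(0 : Fin 3),(1 : Fin 3),(2 : Fin 3),(1 : Fin 3),(1 : Fin 3),(0 : Fin 3),(2 : Fin 3),(0 : Fin 3),(2 : Fin 3),(2 : Fin 3),(0 : Fin 3),(0 : Fin 3),(2 : Fin 3)] (by decide) K hnK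
    · exact colorable_of_missing hGl ((7,8) : Fin 13 × Fin 13) ![false,false,false,false,false,false,false,false,false,false,false,false,true] ![(0 : Fin 3),(1 : Fin 3),(2 : Fin 3),(1 : Fin 3),(1 : Fin 3),(0 : Fin 3),(2 : Fin 3),(1 : Fin 3),(0 : Fin 3),(2 : Fin 3),(0 : Fin 3),(0 : Fin 3),(2 : Fin 3)] (by decide) K hnK
    · exact colorable_of_missing hGl ((8,3) : Fin 13 × Fin 13) ![false,false,false,false,false,false,false,false,false,false,false,false,true] ![(0 : Fin 3),(1 : Fin 3),(2 : Fin 3),(1 : Fin 3),(1 : Fin 3),(0 : Fin 3),(2 : Fin 3),(1 : Fin 3),(2 : Fin 3),(2 : Fin 3),(0 : Fin 3),(0 : Fin 3),(2 : Fin 3)] (by decide) K hnK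
    · exact colorable_of_missing hGl ((1,9) : Fin 13 × Fin 13) ![false,false,false,false,false,false,false,false,true,false,false,false,false] ![(0 : Fin 3),(1 : Fin 3),(2 : Fin 3),(2 : Fin 3),(1 : Fin 3),(0 : Fin 3),(2 : Fin 3),(1 : Fin 3),(0 : Fin 3),(0 : Fin 3),(1 : Fin 3),(0 : Fin 3),(1 : Fin 3)] (by decide) K hnK
    · exact colorable_of_missing hGl ((9,10) : Fin 13 × Fin 13) ![false,false,false,false,false,false,false,false,true,false,false,false,false] ![(0 : Fin 3),(1 : Fin 3),(2 : Fin 3),(2 : Fin 3),(1 : Fin 3),(0 : Fin 3),(2 : Fin 3),(1 : Fin 3),(0 : Fin 3),(2 : Fin 3),(1 : Fin 3),(0 : Fin 3),(1 : Fin 3)] (by decide) K hnK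
    · exact colorable_of_missing hGl ((10,3) : Fin 13 × Fin 13) ![false,false,false,false,false,false,false,false,true,false,false,false,false] ![(0 : Fin 3),(1 : Fin 3),(2 : Fin 3),(2 : Fin 3),(1 : Fin 3),(0 : Fin 3),(2 : Fin 3),(1 : Fin 3),(0 : Fin 3),(2 : Fin 3),(0 : Fin 3),(0 : Fin 3),(1 : Fin 3)] (by decide) K hnK
    · exact colorable_of_missing hGl ((2,11) : Fin 13 × Fin 13) ![false,false,false,false,false,false,false,false,false,false,true,false,false] ![(0 : Fin 3),(1 : Fin 3),(2 : Fin 3),(0 : Fin 3),(1 : Fin 3),(0 : Fin 3),(2 : Fin 3),(1 : Fin 3),(2 : Fin 3),(2 : Fin 3),(1 : Fin 3),(1 : Fin 3),(2 : Fin 3)] (by decide) K hnK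
    · exact colorable_of_missing hGl ((11,12) : Fin 13 × Fin 13) ![false,false,false,false,false,false,false,false,false,false,true,false,false] ![(0 : Fin 3),(1 : Fin 3),(2 : Fin 3),(0 : Fin 3),(1 : Fin 3),(0 : Fin 3),(2 : Fin 3),(1 : Fin 3),(2 : Fin 3),(2 : Fin 3),(1 : Fin 3),(0 : Fin 3),(2 : Fin 3)] (by decide) K hnK
    · exact colorable_of_missing hGl ((12,3) : Fin 13 × Fin 13) ![false,false,false,false,false,false,false,false,false,false,true,false,false] ![(0 : Fin 3),(1 : Fin 3),(2 : Fin 3),(0 : Fin 3),(1 : Fin 3),(0 : Fin 3),(2 : Fin 3),(1 : Fin 3),(2 : Fin 3),(2 : Fin 3),(1 : Fin 3),(0 : Fin 3),(1 : Fin 3)] (by decide) K hnK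

lemma sub3 (K : E3.Subgraph) (hK : K.Proper) : K.toOGraph.PushablyColorable 3 := by
  have hGl : ∀ u v : Fin 13, E3.adj u v → (u, v) ∈ ln3 := fun _ _ h => h
  rcases hK with hv | ⟨u, v, huv, hnK⟩
  · obtain ⟨x, hx⟩ := (Set.ne_univ_iff_exists_notMem _).mp hv
    fin_cases x
    · exact colorable_of_missing hGl ((4,0) : Fin 13 × Fin 13) ![false,false,false,true,false,true,false,false,true,false,false,true,false] ![(0 : Fin 3),(1 : Fin 3),(0 : Fin 3),(1 : Fin 3),(1 : Fin 3),(2 : Fin 3),(2 : Fin 3),(0 : Fin 3),(2 : Fin 3),(1 : Fin 3),(2 : Fin 3),(0 : Fin 3),(2 : Fin 3)] (by decide) K (fun h => hx (K.mem_right _ _ h))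
    · exact colorable_of_missing hGl ((5,1) : Fin 13 × Fin 13) ![false,false,false,false,false,false,false,false,true,false,false,false,true] ![(0 : Fin 3),(1 : Fin 3),(1 : Fin 3),(0 : Fin 3),(2 : Fin 3),(2 : Fin 3),(2 : Fin 3),(0 : Fin 3),(2 : Fin 3),(1 : Fin 3),(2 : Fin 3),(2 : Fin 3),(1 : Fin 3)] (by decide) K (fun h => hx (K.mem_right _ _ h))
    · exact colorable_of_missing hGl ((2,4) : Fin 13 × Fin 13) ![false,false,false,true,false,true,false,false,true,false,false,true,false] ![(0 : Fin 3),(1 : Fin 3),(0 : Fin 3),(1 : Fin 3),(2 : Fin 3),(2 : Fin 3),(2 : Fin 3),(0 : Fin 3),(2 : Fin 3),(1 : Fin 3),(2 : Fin 3),(0 : Fin 3),(2 : Fin 3)] (by decide) K (fun h => hx (K.mem_left _ _ h))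
    · exact colorable_of_missing hGl ((10,3) : Fin 13 × Fin 13) ![false,false,false,false,true,false,false,false,true,false,false,false,false] ![(0 : Fin 3),(1 : Fin 3),(2 : Fin 3),(1 : Fin 3),(1 : Fin 3),(0 : Fin 3),(2 : Fin 3),(0 : Fin 3),(2 : Fin 3),(1 : Fin 3),(2 : Fin 3),(2 : Fin 3),(0 : Fin 3)] (by decide) K (fun h => hx (K.mem_right _ _ h))
    · exact colorable_of_missing hGl ((2,4) : Fin 13 × Fin 13) ![false,false,false,true,false,true,false,false,true,false,false,true,false] ![(0 : Fin 3),(1 : Fin 3),(0 : Fin 3),(1 : Fin 3),(2 : Fin 3),(2 : Fin 3),(2 : Fin 3),(0 : Fin 3),(2 : Fin 3),(1 : Fin 3),(2 : Fin 3),(0 : Fin 3),(2 : Fin 3)] (by decide) K (fun h => hx (K.mem_right _ _ h))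
    · exact colorable_of_missing hGl ((2,5) : Fin 13 × Fin 13) ![false,false,false,false,false,false,false,false,true,false,false,false,true] ![(0 : Fin 3),(1 : Fin 3),(1 : Fin 3),(0 : Fin 3),(2 : Fin 3),(0 : Fin 3),(2 : Fin 3),(0 : Fin 3),(2 : Fin 3),(1 : Fin 3),(2 : Fin 3),(2 : Fin 3),(1 : Fin 3)] (by decide) K (fun h => hx (K.mem_right _ _ h))
    · exact colorable_of_missing hGl ((6,0) : Fin 13 × Fin 13) ![false,false,false,false,false,false,false,false,false,false,false,false,false] ![(0 : Fin 3),(0 : Fin 3),(1 : Fin 3),(0 : Fin 3),(2 : Fin 3),(2 : Fin 3),(0 : Fin 3),(1 : Fin 3),(2 : Fin 3),(1 : Fin 3),(2 : Fin 3),(1 : Fin 3),(2 : Fin 3)] (by decide) K (fun h => hx (K.mem_left _ _ h))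
    · exact colorable_of_missing hGl ((6,7) : Fin 13 × Fin 13) ![false,false,false,false,false,false,false,false,false,false,false,false,false] ![(0 : Fin 3),(0 : Fin 3),(1 : Fin 3),(0 : Fin 3),(2 : Fin 3),(2 : Fin 3),(2 : Fin 3),(1 : Fin 3),(2 : Fin 3),(1 : Fin 3),(2 : Fin 3),(1 : Fin 3),(2 : Fin 3)] (by decide) K (fun h => hx (K.mem_right _ _ h))
    · exact colorable_of_missing hGl ((7,8) : Fin 13 × Fin 13) ![false,false,false,false,false,false,false,false,false,false,false,false,false] ![(0 : Fin 3),(0 : Fin 3),(1 : Fin 3),(0 : Fin 3),(2 : Fin 3),(2 : Fin 3),(2 : Fin 3),(0 : Fin 3),(2 : Fin 3),(1 : Fin 3),(2 : Fin 3),(1 : Fin 3),(2 : Fin 3)] (by decide) K (fun h => hx (K.mem_right _ _ h))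
    · exact colorable_of_missing hGl ((0,9) : Fin 13 × Fin 13) ![false,false,false,false,true,false,false,false,true,false,true,false,false] ![(0 : Fin 3),(1 : Fin 3),(2 : Fin 3),(1 : Fin 3),(1 : Fin 3),(0 : Fin 3),(2 : Fin 3),(0 : Fin 3),(2 : Fin 3),(0 : Fin 3),(2 : Fin 3),(2 : Fin 3),(0 : Fin 3)] (by decide) K (fun h => hx (K.mem_right _ _ h))
    · exact colorable_of_missing hGl ((9,10) : Fin 13 × Fin 13) ![false,false,false,false,true,false,false,false,true,false,false,false,false] ![(0 : Fin 3),(1 : Fin 3),(2 : Fin 3),(1 : Fin 3),(1 : Fin 3),(0 : Fin 3),(2 : Fin 3),(0 : Fin 3),(2 : Fin 3),(1 : Fin 3),(0 : Fin 3),(2 : Fin 3),(0 : Fin 3)] (by decide) K (fun h => hx (K.mem_right _ _ h))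
    · exact colorable_of_missing hGl ((1,11) : Fin 13 × Fin 13) ![false,false,false,true,true,false,false,false,true,true,false,false,false] ![(0 : Fin 3),(1 : Fin 3),(2 : Fin 3),(0 : Fin 3),(1 : Fin 3),(0 : Fin 3),(2 : Fin 3),(0 : Fin 3),(2 : Fin 3),(2 : Fin 3),(1 : Fin 3),(0 : Fin 3),(1 : Fin 3)] (by decide) K (fun h => hx (K.mem_right _ _ h))
    · exact colorable_of_missing hGl ((11,12) : Fin 13 × Fin 13) ![false,false,false,true,true,false,false,false,true,true,false,false,false] ![(0 : Fin 3),(1 : Fin 3),(2 : Fin 3),(0 : Fin 3),(1 : Fin 3),(0 : Fin 3),(2 : Fin 3),(0 : Fin 3),(2 : Fin 3),(2 : Fin 3),(1 : Fin 3),(2 : Fin 3),(1 : Fin 3)] (by decide) K (fun h => hx (K.mem_right _ _ h))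
  · have hmem : (u, v) ∈ ln3 := huv
    simp only [ln3, List.mem_cons, List.not_mem_nil, or_false, Prod.mk.injEq] at hmem
    rcases hmem with ⟨rfl, rfl⟩|⟨rfl, rfl⟩|⟨rfl, rfl⟩|⟨rfl, rfl⟩|⟨rfl, rfl⟩|⟨rfl, rfl⟩|⟨rfl, rfl⟩|⟨rfl, rfl⟩|⟨rfl, rfl⟩|⟨rfl, rfl⟩|⟨rfl, rfl⟩|⟨rfl, rfl⟩|⟨rfl, rfl⟩|⟨rfl, rfl⟩|⟨rfl, rfl⟩
    · exact colorable_of_missing hGl ((2,4) : Fin 13 × Fin 13) ![false,false,false,true,false,true,false,false,true,false,false,true,false] ![(0 : Fin 3),(1 : Fin 3),(0 : Fin 3),(1 : Fin 3),(2 : Fin 3),(2 : Fin 3),(2 : Fin 3),(0 : Fin 3),(2 : Fin 3),(1 : Fin 3),(2 : Fin 3),(0 : Fin 3),(2 : Fin 3)] (by decide) K hnK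
    · exact colorable_of_missing hGl ((4,0) : Fin 13 × Fin 13) ![false,false,false,true,false,true,false,false,true,false,false,true,false] ![(0 : Fin 3),(1 : Fin 3),(0 : Fin 3),(1 : Fin 3),(1 : Fin 3),(2 : Fin 3),(2 : Fin 3),(0 : Fin 3),(2 : Fin 3),(1 : Fin 3),(2 : Fin 3),(0 : Fin 3),(2 : Fin 3)] (by decide) K hnK
    · exact colorable_of_missing hGl ((2,5) : Fin 13 × Fin 13) ![false,false,false,false,false,false,false,false,true,false,false,false,true] ![(0 : Fin 3),(1 : Fin 3),(1 : Fin 3),(0 : Fin 3),(2 : Fin 3),(0 : Fin 3),(2 : Fin 3),(0 : Fin 3),(2 : Fin 3),(1 : Fin 3),(2 : Fin 3),(2 : Fin 3),(1 : Fin 3)] (by decide) K hnK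
    · exact colorable_of_missing hGl ((5,1) : Fin 13 × Fin 13) ![false,false,false,false,false,false,false,false,true,false,false,false,true] ![(0 : Fin 3),(1 : Fin 3),(1 : Fin 3),(0 : Fin 3),(2 : Fin 3),(2 : Fin 3),(2 : Fin 3),(0 : Fin 3),(2 : Fin 3),(1 : Fin 3),(2 : Fin 3),(2 : Fin 3),(1 : Fin 3)] (by decide) K hnK
    · exact colorable_of_missing hGl ((6,0) : Fin 13 × Fin 13) ![false,false,false,false,false,false,false,false,false,false,false,false,false] ![(0 : Fin 3),(0 : Fin 3),(1 : Fin 3),(0 : Fin 3),(2 : Fin 3),(2 : Fin 3),(0 : Fin 3),(1 : Fin 3),(2 : Fin 3),(1 : Fin 3),(2 : Fin 3),(1 : Fin 3),(2 : Fin 3)] (by decide) K hnK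
    · exact colorable_of_missing hGl ((6,7) : Fin 13 × Fin 13) ![false,false,false,false,false,false,false,false,false,false,false,false,false] ![(0 : Fin 3),(0 : Fin 3),(1 : Fin 3),(0 : Fin 3),(2 : Fin 3),(2 : Fin 3),(2 : Fin 3),(1 : Fin 3),(2 : Fin 3),(1 : Fin 3),(2 : Fin 3),(1 : Fin 3),(2 : Fin 3)] (by decide) K hnK
    · exact colorable_of_missing hGl ((7,8) : Fin 13 × Fin 13) ![false,false,false,false,false,false,false,false,false,false,false,false,false] ![(0 : Fin 3),(0 : Fin 3),(1 : Fin 3),(0 : Fin 3),(2 : Fin 3),(2 : Fin 3),(2 : Fin 3),(0 : Fin 3),(2 : Fin 3),(1 : Fin 3),(2 : Fin 3),(1 : Fin 3),(2 : Fin 3)] (by decide) K hnK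
    · exact colorable_of_missing hGl ((8,1) : Fin 13 × Fin 13) ![false,false,false,false,false,false,false,false,false,false,false,false,false] ![(0 : Fin 3),(0 : Fin 3),(1 : Fin 3),(0 : Fin 3),(2 : Fin 3),(2 : Fin 3),(2 : Fin 3),(0 : Fin 3),(1 : Fin 3),(1 : Fin 3),(2 : Fin 3),(1 : Fin 3),(2 : Fin 3)] (by decide) K hnK
    · exact colorable_of_missing hGl ((0,9) : Fin 13 × Fin 13) ![false,false,false,false,true,false,false,false,true,false,true,false,false] ![(0 : Fin 3),(1 : Fin 3),(2 : Fin 3),(1 : Fin 3),(1 : Fin 3),(0 : Fin 3),(2 : Fin 3),(0 : Fin 3),(2 : Fin 3),(0 : Fin 3),(2 : Fin 3),(2 : Fin 3),(0 : Fin 3)] (by decide) K hnK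
    · exact colorable_of_missing hGl ((9,10) : Fin 13 × Fin 13) ![false,false,false,false,true,false,false,false,true,false,false,false,false] ![(0 : Fin 3),(1 : Fin 3),(2 : Fin 3),(1 : Fin 3),(1 : Fin 3),(0 : Fin 3),(2 : Fin 3),(0 : Fin 3),(2 : Fin 3),(1 : Fin 3),(0 : Fin 3),(2 : Fin 3),(0 : Fin 3)] (by decide) K hnK
    · exact colorable_of_missing hGl ((10,3) : Fin 13 × Fin 13) ![false,false,false,false,true,false,false,false,true,false,false,false,false] ![(0 : Fin 3),(1 : Fin 3),(2 : Fin 3),(1 : Fin 3),(1 : Fin 3),(0 : Fin 3),(2 : Fin 3),(0 : Fin 3),(2 : Fin 3),(1 : Fin 3),(2 : Fin 3),(2 : Fin 3),(0 : Fin 3)] (by decide) K hnK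
    · exact colorable_of_missing hGl ((1,11) : Fin 13 × Fin 13) ![false,false,false,true,true,false,false,false,true,true,false,false,false] ![(0 : Fin 3),(1 : Fin 3),(2 : Fin 3),(0 : Fin 3),(1 : Fin 3),(0 : Fin 3),(2 : Fin 3),(0 : Fin 3),(2 : Fin 3),(2 : Fin 3),(1 : Fin 3),(0 : Fin 3),(1 : Fin 3)] (by decide) K hnK
    · exact colorable_of_missing hGl ((11,12) : Fin 13 × Fin 13) ![false,false,false,true,true,false,false,false,true,true,false,false,false] ![(0 : Fin 3),(1 : Fin 3),(2 : Fin 3),(0 : Fin 3),(1 : Fin 3),(0 : Fin 3),(2 : Fin 3),(0 : Fin 3),(2 : Fin 3),(2 : Fin 3),(1 : Fin 3),(2 : Fin 3),(1 : Fin 3)] (by decide) K hnK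
    · exact colorable_of_missing hGl ((12,3) : Fin 13 × Fin 13) ![false,false,false,true,true,false,false,false,true,true,false,false,false] ![(0 : Fin 3),(1 : Fin 3),(2 : Fin 3),(0 : Fin 3),(1 : Fin 3),(0 : Fin 3),(2 : Fin 3),(0 : Fin 3),(2 : Fin 3),(2 : Fin 3),(1 : Fin 3),(2 : Fin 3),(0 : Fin 3)] (by decide) K hnK
    · exact colorable_of_missing hGl ((3,2) : Fin 13 × Fin 13) ![false,false,false,false,true,false,false,false,true,false,false,false,true] ![(0 : Fin 3),(1 : Fin 3),(2 : Fin 3),(0 : Fin 3),(1 : Fin 3),(0 : Fin 3),(2 : Fin 3),(0 : Fin 3),(2 : Fin 3),(1 : Fin 3),(2 : Fin 3),(2 : Fin 3),(1 : Fin 3)] (by decide) K hnK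

lemma cnt1 : E1.arcCount = 15 := by
  show Nat.card {p : Fin 13 × Fin 13 // (p.1, p.2) ∈ ln1} = 15
  rw [Nat.card_eq_fintype_card]
  decide

lemma cnt2 : E2.arcCount = 15 := by
  show Nat.card {p : Fin 13 × Fin 13 // (p.1, p.2) ∈ ln2} = 15
  rw [Nat.card_eq_fintype_card]
  decide

lemma cnt3 : E3.arcCount = 15 := by
  show Nat.card {p : Fin 13 × Fin 13 // (p.1, p.2) ∈ ln3} = 15
  rw [Nat.card_eq_fintype_card]
  decide

end Aux

/-- Each of `E⃗₁, E⃗₂, E⃗₃` is pushably 3-critical, has 13 vertices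
and 15 arcs, and has maximum average degree exactly `30/13`. -/
theorem E123_pushably3Critical :
    (OGraph.Pushably3Critical E1 ∧ E1.arcCount = 15 ∧ OGraph.MadEq E1 (30 / 13)) ∧
    (OGraph.Pushably3Critical E2 ∧ E2.arcCount = 15 ∧ OGraph.MadEq E2 (30 / 13)) ∧
    (OGraph.Pushably3Critical E3 ∧ E3.arcCount = 15 ∧ OGraph.MadEq E3 (30 / 13)) ∧
    Nat.card (Fin 13) = 13 := by
  refine ⟨⟨⟨not3col1, sub1⟩, cnt1, madEq_of (fun _ _ h => h) cnt1 hb1⟩,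
    ⟨⟨not3col2, sub2⟩, cnt2, madEq_of (fun _ _ h => h) cnt2 hb2⟩,
    ⟨⟨not3col3, sub3⟩, cnt3, madEq_of (fun _ _ h => h) cnt3 hb3⟩, by simp⟩
end

section
/- For all integers p ≥ q ≥ 1, the oriented graph AT(C⃗3) admits an oriented (2p+3q)-L(p,q)-labeling; explicitly, the map f with f(0̄) = 0, f(0̄') = q, f(1̄) = p+q, f(1̄') = p+2q, f(2̄) = 2p+2q, f(2̄') = 2p+3q is an oriented (2p+3q)-L(p,q)-labeling of AT(C⃗3). -/
set_option maxRecDepth 4000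


set_option maxHeartbeats 1000000

/-- For all integers `p ≥ q ≥ 1`, the explicit map
`f(0̄)=0, f(0̄')=q, f(1̄)=p+q, f(1̄')=p+2q, f(2̄)=2p+2q, f(2̄')=2p+3q`
is an oriented `(2p+3q)`-`L(p,q)`-labeling of `AT(C⃗₃)`; in particular `AT(C⃗₃)`
admits an oriented `(2p+3q)`-`L(p,q)`-labeling. -/
theorem ATC3_orientedLabeling {p q : ℕ} (hq : 1 ≤ q) (hpq : q ≤ p) :
    OGraph.IsOrientedLabeling ATC3 p q (2 * p + 3 * q)
      (fun v => v.1.val * (p + q) + (if v.2 then q else 0)) ∧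
    ∃ g : ZMod 3 × Bool → ℕ, OGraph.IsOrientedLabeling ATC3 p q (2 * p + 3 * q) g := by
  set g : ZMod 3 × Bool → ℕ := fun v => v.1.val * (p + q) + (if v.2 then q else 0) with hgdef
  have hcases : ∀ v : ZMod 3 × Bool,
      v = ((0:ZMod 3), false) ∨ v = ((0:ZMod 3), true) ∨ v = ((1:ZMod 3), false) ∨
      v = ((1:ZMod 3), true) ∨ v = ((2:ZMod 3), false) ∨ v = ((2:ZMod 3), true) := by decide
  have hadj : ∀ u v : ZMod 3 × Bool, ATC3.adj u v ↔
      ((u.2 = v.2 ∧ v.1 = u.1 + 1) ∨ (¬(u.2 = v.2) ∧ u.1 = v.1 + 1)) := fun _ _ => Iff.rfl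
  have hinj : ∀ u v : ZMod 3 × Bool, g u = g v → u = v := by
    intro u v
    rcases hcases u with rfl|rfl|rfl|rfl|rfl|rfl <;> rcases hcases v with rfl|rfl|rfl|rfl|rfl|rfl <;>
      intro h <;> first
        | rfl
        | (exfalso
           simp only [hgdef, show ((0:ZMod 3)).val = 0 from rfl, show ((1:ZMod 3)).val = 1 from rfl,
             show ((2:ZMod 3)).val = 2 from rfl, if_true, Bool.false_eq_true, if_false] at h
           omega)
  have main : OGraph.IsOrientedLabeling ATC3 p q (2 * p + 3 * q) g := by
    refine ⟨⟨?_, ?_, ?_⟩, ?_, ?_⟩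
    · intro v
      rcases hcases v with rfl|rfl|rfl|rfl|rfl|rfl <;>
        simp only [hgdef, show ((0:ZMod 3)).val = 0 from rfl, show ((1:ZMod 3)).val = 1 from rfl,
          show ((2:ZMod 3)).val = 2 from rfl, if_true, Bool.false_eq_true, if_false] <;> omega
    · rintro u v (h | h) <;>
      · rw [hadj] at h
        rcases hcases u with rfl|rfl|rfl|rfl|rfl|rfl <;>
          rcases hcases v with rfl|rfl|rfl|rfl|rfl|rfl <;>
          first
          | (exact absurd h (by decide))
          | (clear h
             simp only [hgdef, show ((0:ZMod 3)).val = 0 from rfl,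
               show ((1:ZMod 3)).val = 1 from rfl, show ((2:ZMod 3)).val = 2 from rfl,
               if_true, Bool.false_eq_true, if_false]
             first | (rw [abs_of_nonneg (by push_cast; omega)]; push_cast; omega)
                   | (rw [abs_of_nonpos (by push_cast; omega)]; push_cast; omega))
    · intro u w v h1 h2
      rw [hadj] at h1 h2
      rcases hcases u with rfl|rfl|rfl|rfl|rfl|rfl <;>
        rcases hcases w with rfl|rfl|rfl|rfl|rfl|rfl <;>
        rcases hcases v with rfl|rfl|rfl|rfl|rfl|rfl <;>
        first
        | (exact absurd h1 (by decide))
        | (exact absurd h2 (by decide))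
        | (clear h1 h2
           simp only [hgdef, show ((0:ZMod 3)).val = 0 from rfl,
             show ((1:ZMod 3)).val = 1 from rfl, show ((2:ZMod 3)).val = 2 from rfl,
             if_true, Bool.false_eq_true, if_false]
           first | (rw [abs_of_nonneg (by push_cast; omega)]; push_cast; omega)
                 | (rw [abs_of_nonpos (by push_cast; omega)]; push_cast; omega))
    · intro u v huv heq
      exact ATC3.irrefl' v (hinj u v heq ▸ huv)
    · intro u v w x huv hwx heq1 heq2
      have h1 : u = x := hinj u x heq1
      have h2 : v = w := hinj v w heq2
      subst h1; subst h2
      exact ATC3.asymm' u v huv hwx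
  exact ⟨main, g, main⟩
end

section
/- Let P⃗ be an oriented (x,y)-path with k arcs, where 1 ≤ k ≤ 5, and let i ∈ Z/3Z. Say that a color c ∈ Z/3Z is allowed at y (given color i at x) if there is a subset S of the internal vertices of P⃗ and a homomorphism f of P⃗^S to C⃗3 with f(x) = i and f(y) = c. If P⃗ is even (the number of forward arcs from x to y is even), then the set of allowed colors at y is: {i+2} if k = 1; {i+1, i+2} if k = 2; {i, i+1} if k = 3; all of Z/3Z if k = 4 or k = 5. If P⃗ is odd, then the set of allowed colors at y is: {i+1} if k = 1; {i} if k = 2; {i, i+2} if k = 3; {i+1, i+2} if k = 4; all of Z/3Z if k = 5. -/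
set_option maxHeartbeats 1000000

def contribAC (n : ℕ) (ε : Fin n → Bool) (S : Fin (n+1) → Bool) (j : Fin n) : ZMod 3 :=
  if (S j.castSucc == S j.succ) = ε j then 1 else 2

lemma fin_telescope {n : ℕ} (f : Fin (n+1) → ZMod 3) (d : Fin n → ZMod 3)
    (h : ∀ j : Fin n, f j.succ = f j.castSucc + d j) :
    f (Fin.last n) = f 0 + ∑ j : Fin n, d j := by
  induction n with
  | zero => simp
  | succ m ih =>
      have key := ih (fun v => f v.castSucc) (fun j => d j.castSucc) (fun j => by
        have := h j.castSucc; rw [Fin.succ_castSucc] at this; exact this)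
      rw [Fin.sum_univ_castSucc]
      have hlast : Fin.last (m+1) = (Fin.last m).succ := rfl
      rw [hlast, h (Fin.last m)]
      rw [key]
      have h0 : ((0 : Fin (m+1)).castSucc) = (0 : Fin (m+2)) := rfl
      rw [h0, add_assoc]

lemma allowedColor_iff_sum (n : ℕ) (ε : Fin n → Bool) (i c : ZMod 3) :
    allowedColor n ε i c ↔
      ∃ S : Fin (n+1) → Bool, S 0 = false ∧ S (Fin.last n) = false ∧
        c = i + ∑ j : Fin n, contribAC n ε S j := by
  classical
  have z1 : ∀ a b : ZMod 3, a = b + 1 → b = a + 2 := by decide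
  have z2 : ∀ a b : ZMod 3, b = a + 2 → a = b + 1 := by decide
  constructor
  · rintro ⟨S, hS, f, hf, h0, hl⟩
    set Sb : Fin (n+1) → Bool := fun v => if v ∈ S then true else false with hSb
    have hSbeq : ∀ u v : Fin (n+1), (Sb u = Sb v) ↔ (u ∈ S ↔ v ∈ S) := by
      intro u v
      by_cases hu : u ∈ S <;> by_cases hv : v ∈ S <;> simp [hSb, hu, hv]
    have hedge : ∀ j : Fin n, f j.succ = f j.castSucc + contribAC n ε Sb j := by
      intro j
      set a := j.castSucc with ha
      set b := j.succ with hb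
      by_cases hε : ε j = true
      · by_cases hsame : (a ∈ S ↔ b ∈ S)
        · have hadj := hf a b (Or.inl ⟨hsame, ⟨j, Or.inl ⟨hε, rfl, rfl⟩⟩⟩)
          have hc : contribAC n ε Sb j = 1 := by
            have : Sb a = Sb b := (hSbeq a b).mpr hsame
            simp [contribAC, this, hε]
            exact fun h => absurd this h
          rw [hc]; exact hadj
        · have hadj := hf b a (Or.inr ⟨fun h => hsame h.symm, ⟨j, Or.inl ⟨hε, rfl, rfl⟩⟩⟩)
          have hc : contribAC n ε Sb j = 2 := by
            have hne : Sb a ≠ Sb b := fun h => hsame ((hSbeq a b).mp h)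
            simp [contribAC, Bool.beq_eq_decide_eq, hne, hε]
            exact fun h => absurd h hne
          rw [hc]; exact z1 _ _ hadj
      · have hε' : ε j = false := by simpa using hε
        by_cases hsame : (b ∈ S ↔ a ∈ S)
        · have hadj := hf b a (Or.inl ⟨hsame, ⟨j, Or.inr ⟨hε', rfl, rfl⟩⟩⟩)
          have hc : contribAC n ε Sb j = 2 := by
            have : Sb a = Sb b := (hSbeq a b).mpr hsame.symm
            simp [contribAC, this, hε']
            exact fun h => absurd this h
          rw [hc]; exact z1 _ _ hadj
        · have hadj := hf a b (Or.inr ⟨fun h => hsame h.symm, ⟨j, Or.inr ⟨hε', rfl, rfl⟩⟩⟩)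
          have hc : contribAC n ε Sb j = 1 := by
            have hne : Sb a ≠ Sb b := fun h => hsame (((hSbeq a b).mp h).symm)
            simp [contribAC, Bool.beq_eq_decide_eq, hne, hε']
            exact fun h => absurd h hne
          rw [hc]; exact hadj
    refine ⟨Sb, ?_, ?_, ?_⟩
    · by_cases h : (0 : Fin (n+1)) ∈ S
      · exact absurd rfl (hS 0 h).1
      · simp [hSb, h]
    · by_cases h : (Fin.last n) ∈ S
      · exact absurd rfl (hS _ h).2
      · simp [hSb, h]
    · rw [← hl, ← h0]; exact fin_telescope f _ hedge
  · rintro ⟨Sb, h0, hl, hc⟩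
    set C : Fin n → ZMod 3 := contribAC n ε Sb with hC
    refine ⟨{v | Sb v = true}, ?_, ?_⟩
    · intro v hv
      constructor
      · rintro rfl; rw [Set.mem_setOf_eq, h0] at hv; exact Bool.noConfusion hv
      · rintro rfl; rw [Set.mem_setOf_eq, hl] at hv; exact Bool.noConfusion hv
    · refine ⟨fun v => i + ∑ j : Fin n, if (j : ℕ) < (v : ℕ) then C j else 0, ?_, ?_, ?_⟩
      · -- the homomorphism property
        have hedge : ∀ j : Fin n,
            (i + ∑ j' : Fin n, if (j' : ℕ) < (j.succ : ℕ) then C j' else 0) =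
            (i + ∑ j' : Fin n, if (j' : ℕ) < (j.castSucc : ℕ) then C j' else 0) + C j := by
          intro j
          have hsplit : ∀ j' : Fin n,
              (if (j' : ℕ) < (j.succ : ℕ) then C j' else 0) =
              (if (j' : ℕ) < (j.castSucc : ℕ) then C j' else 0) +
              (if j' = j then C j' else 0) := by
            intro j'
            simp only [Fin.val_succ, Fin.coe_castSucc]
            by_cases h1 : (j' : ℕ) < (j : ℕ)
            · have hne : ¬ j' = j := fun e => by subst e; omega
              simp [h1, Nat.lt_succ_of_lt h1, hne]
            · by_cases h2 : j' = j
              · subst h2; simp [h1]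
              · have h3 : ¬ (j' : ℕ) < (j : ℕ) + 1 := by
                  have := Fin.val_ne_of_ne h2; omega
                simp [h1, h2, h3]
          rw [Finset.sum_congr rfl (fun j' _ => hsplit j'), Finset.sum_add_distrib,
            Finset.sum_ite_eq' Finset.univ j (fun j' => C j')]
          simp [add_assoc]
        have hbeq : ∀ u v : Fin (n+1),
            ((u ∈ {v | Sb v = true}) ↔ (v ∈ {v | Sb v = true})) → (Sb u == Sb v) = true := by
          intro u v h
          simp only [Set.mem_setOf_eq] at h
          cases hA : Sb u <;> cases hB : Sb v <;> rw [hA, hB] at h <;> revert h <;> decide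
        have hbne : ∀ u v : Fin (n+1),
            ¬((u ∈ {v | Sb v = true}) ↔ (v ∈ {v | Sb v = true})) → (Sb u == Sb v) = false := by
          intro u v h
          simp only [Set.mem_setOf_eq] at h
          cases hA : Sb u <;> cases hB : Sb v <;> rw [hA, hB] at h <;> revert h <;> decide
        rintro u v (⟨hiff, j, (⟨hε, rfl, rfl⟩ | ⟨hε, rfl, rfl⟩)⟩ |
                    ⟨hniff, j, (⟨hε, rfl, rfl⟩ | ⟨hε, rfl, rfl⟩)⟩)
        · -- same side, forward arc castSucc → succ
          have hcj : C j = 1 := by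
            simp [hC, contribAC, hbeq _ _ hiff, hε]
          show _ = _ + 1
          rw [← hcj]; exact hedge j
        · -- same side, backward arc succ → castSucc
          have hcj : C j = 2 := by
            have := hbeq _ _ hiff
            rw [Bool.beq_comm] at this
            simp [hC, contribAC, this, hε]
          show _ = _ + 1
          exact z2 _ _ (by rw [← hcj]; exact hedge j)
        · -- different side, original arc castSucc → succ reversed: u = succ, v = castSucc
          have hcj : C j = 2 := by
            have := hbne _ _ hniff
            rw [Bool.beq_comm] at this
            simp [hC, contribAC, this, hε]
          show _ = _ + 1
          exact z2 _ _ (by rw [← hcj]; exact hedge j)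
        · -- different side, original arc succ → castSucc reversed: u = castSucc, v = succ
          have hcj : C j = 1 := by
            simp [hC, contribAC, hbne _ _ hniff, hε]
          show _ = _ + 1
          rw [← hcj]; exact hedge j
      · simp
      · show i + ∑ j : Fin n, (if (j : ℕ) < ((Fin.last n : Fin (n+1)) : ℕ) then C j else 0) = c
        rw [hc]
        exact congrArg (i + ·) (Finset.sum_congr rfl (fun j _ => by
          rw [if_pos (show (j : ℕ) < ((Fin.last n : Fin (n+1)) : ℕ) by
            rw [Fin.val_last]; exact j.isLt)]))


set_option synthInstance.maxSize 1000 in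
set_option maxRecDepth 4000 in
set_option synthInstance.maxHeartbeats 1000000 in
/-- The allowed colors at the endpoint `y` of an oriented
`(x,y)`-path with `k` arcs (`1 ≤ k ≤ 5`), given color `i` at `x`, are exactly as in
the table: for even orientations `{i+2}`, `{i+1,i+2}`, `{i,i+1}`, all, all (for
`k = 1,…,5`), and for odd orientations `{i+1}`, `{i}`, `{i,i+2}`, `{i+1,i+2}`, all. -/
theorem allowedColor_table (k : ℕ) (hk1 : 1 ≤ k) (hk5 : k ≤ 5)
    (ε : Fin k → Bool) (i c : ZMod 3) :
    allowedColor k ε i c ↔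
      (((Finset.univ.filter fun j => ε j = true).card % 2 = 0 ∧
          ((k = 1 ∧ c = i + 2) ∨
           (k = 2 ∧ (c = i + 1 ∨ c = i + 2)) ∨
           (k = 3 ∧ (c = i ∨ c = i + 1)) ∨
           k = 4 ∨ k = 5)) ∨
       ((Finset.univ.filter fun j => ε j = true).card % 2 = 1 ∧
          ((k = 1 ∧ c = i + 1) ∨
           (k = 2 ∧ c = i) ∨
           (k = 3 ∧ (c = i ∨ c = i + 2)) ∨
           (k = 4 ∧ (c = i + 1 ∨ c = i + 2)) ∨
           k = 5))) := by
  rw [allowedColor_iff_sum]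
  interval_cases k <;> revert i c ε <;> decide
end
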